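/- arXiv:2601.23213 — 4 statements merged into one kernel-verified Lean document; each statement's English description precedes it below -/
import Mathlib

section
/- Let P be a d×n matrix with nonnegative real entries and columns P₁,…,Pₙ ∈ (ℝ≥0)^d. Let P̃ be the (dn)×n block-diagonal matrix whose i-th column contains Pᵢ in rows (i−1)d+1,…,id and zeros elsewhere, and let P̂ be the (dn)×n matrix obtained from P by appending (n−1)d rows of zeros. Then there exists a conditionally mixing channel mapping P̂ to P̃, and there exists a conditionally mixing channel mapping P̃ to P̂. -/
open MeasureTheory
open scoped ENNReal

noncomputable section

/-- Base-2 logarithm. -/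
def log2 (x : ℝ) : ℝ := Real.logb 2 x

/-- Base-2 exponential. -/
def exp2 (x : ℝ) : ℝ := (2 : ℝ) ^ x

/-- Rényi entropy of order `α ∈ [0,∞]` of a vector `p` on a finite set. -/
def renyi {X : Type*} [Fintype X] (α : ℝ≥0∞) (p : X → ℝ) : ℝ :=
  if α = 0 then log2 (Nat.card {x : X // 0 < p x})
  else if α = 1 then -∑ x, p x * log2 (p x)
  else if α = ⊤ then -log2 (⨆ x, p x)
  else (1 - α.toReal)⁻¹ * log2 (∑ x, p x ^ α.toReal)

/-- A probability vector on a finite set. -/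
def IsProbVec {X : Type*} [Fintype X] (p : X → ℝ) : Prop :=
  (∀ x, 0 ≤ p x) ∧ ∑ x, p x = 1

/-- A doubly stochastic matrix. -/
def DoublyStochastic {X : Type*} [Fintype X] (S : Matrix X X ℝ) : Prop :=
  (∀ i j, 0 ≤ S i j) ∧ (∀ i, ∑ j, S i j = 1) ∧ (∀ j, ∑ i, S i j = 1)

/-- `Q` is obtained from `P` by a conditionally mixing channel. -/
def CondMixed {X Y Y' : Type*} [Fintype X] [Fintype Y] [Fintype Y']
    (P : Matrix X Y ℝ) (Q : Matrix X Y' ℝ) : Prop :=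
  ∃ (k : ℕ) (S : Fin k → Matrix X X ℝ) (D : Fin k → Matrix Y Y' ℝ),
    (∀ i, DoublyStochastic (S i)) ∧
    (∀ i a b, 0 ≤ D i a b) ∧
    (∀ a, ∑ b, ∑ i, D i a b = 1) ∧
    Q = ∑ i, S i * P * D i

/-- A joint probability distribution on finite alphabets, viewed as a matrix. -/
def IsJointProb {X Y : Type*} [Fintype X] [Fintype Y] (P : Matrix X Y ℝ) : Prop :=
  (∀ x y, 0 ≤ P x y) ∧ ∑ x, ∑ y, P x y = 1

/-- Marginal on the conditioning system: the `y`-th column sum. -/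
def margY {X Y : Type*} [Fintype X] (P : Matrix X Y ℝ) (y : Y) : ℝ := ∑ x, P x y

/-- The conditioned distribution (normalized `y`-th column). -/
def condX {X Y : Type*} [Fintype X] (P : Matrix X Y ℝ) (y : Y) : X → ℝ :=
  fun x => P x y / margY P y

/-- The conditional entropy `H_{t,τ}`. -/
def Hbulk {X Y : Type*} [Fintype X] [Fintype Y] (t : ℝ) (τ : Measure ℝ≥0∞)
    (P : Matrix X Y ℝ) : ℝ :=
  t⁻¹ * log2 (∑ y ∈ Finset.univ.filter (fun y => 0 < margY P y),
    margY P y * exp2 (t * ∫ α, renyi α (condX P y) ∂τ))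

/-- The conditional entropy `H_{0,α}`. -/
def HzeroA {X Y : Type*} [Fintype X] [Fintype Y] (α : ℝ≥0∞) (P : Matrix X Y ℝ) : ℝ :=
  ∑ y ∈ Finset.univ.filter (fun y => 0 < margY P y), margY P y * renyi α (condX P y)

/-- The conditional entropy `H_{-∞,τ}`. -/
def HnegInf {X Y : Type*} [Fintype X] [Fintype Y] (τ : Measure ℝ≥0∞)
    (P : Matrix X Y ℝ) : ℝ :=
  sInf ((fun y => ∫ α, renyi α (condX P y) ∂τ) '' {y | 0 < margY P y})

/-- The conditional entropy `H_{+∞,0}`. -/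
def HposInf {X Y : Type*} [Fintype X] [Fintype Y] (P : Matrix X Y ℝ) : ℝ :=
  sSup ((fun y => renyi 0 (condX P y)) '' {y | 0 < margY P y})

/-- The parameter set `𝒟_bulk`. -/
def Dbulk : Set (ℝ × Measure ℝ≥0∞) :=
  {p | p.1 ≠ 0 ∧ IsProbabilityMeasure p.2 ∧
    ∀ (d n n' : ℕ) (P : Matrix (Fin d) (Fin n) ℝ) (Q : Matrix (Fin d) (Fin n') ℝ),
      IsJointProb P → CondMixed P Q → Hbulk p.1 p.2 P ≤ Hbulk p.1 p.2 Q}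

/-- The parameter set `𝒟_{-∞}`. -/
def DnegInf : Set (Measure ℝ≥0∞) :=
  {τ | IsProbabilityMeasure τ ∧
    ∀ (d n n' : ℕ) (P : Matrix (Fin d) (Fin n) ℝ) (Q : Matrix (Fin d) (Fin n') ℝ),
      IsJointProb P → CondMixed P Q → HnegInf τ P ≤ HnegInf τ Q}

/-- `P'` is obtained from `P` by relabeling (injections) and embedding, with zeros elsewhere. -/
def Embeds {X Y X' Y' : Type*} [Fintype X] [Fintype Y] [Fintype X'] [Fintype Y']
    (P : Matrix X Y ℝ) (P' : Matrix X' Y' ℝ) : Prop :=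
  ∃ (f : X ↪ X') (g : Y ↪ Y'),
    (∀ x y, P' (f x) (g y) = P x y) ∧
    (∀ x' y', P' x' y' ≠ 0 → (∃ x, f x = x') ∧ (∃ y, g y = y'))

/-- Conditional majorization: after a common embedding, a conditionally mixing channel maps
(the embedding of) `P` to (the embedding of) `Q`. -/
def CondMajorizes {X Y X' Y' : Type*} [Fintype X] [Fintype Y] [Fintype X'] [Fintype Y']
    (P : Matrix X Y ℝ) (Q : Matrix X' Y' ℝ) : Prop :=
  ∃ (m n n' : ℕ) (P' : Matrix (Fin m) (Fin n) ℝ) (Q' : Matrix (Fin m) (Fin n') ℝ),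
    Embeds P P' ∧ Embeds Q Q' ∧ CondMixed P' Q'

/-- Kronecker product of matrices. -/
def kron {X Y X' Y' : Type*} (P : Matrix X Y ℝ) (Q : Matrix X' Y' ℝ) :
    Matrix (X × X') (Y × Y') ℝ :=
  Matrix.of fun x y => P x.1 y.1 * Q x.2 y.2

/-- `n`-fold Kronecker power of a matrix. -/
def kronPow {X Y : Type*} (P : Matrix X Y ℝ) (n : ℕ) :
    Matrix (Fin n → X) (Fin n → Y) ℝ :=
  Matrix.of fun x y => ∏ i, P (x i) (y i)

/-- Sum of all entries of a matrix. -/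
def totalMass {X Y : Type*} [Fintype X] [Fintype Y] (P : Matrix X Y ℝ) : ℝ :=
  ∑ x, ∑ y, P x y

/-- `α/(1-α)`, with the convention that it equals `-1` at `α = ∞`. -/
def aRatio (α : ℝ≥0∞) : ℝ := if α = ⊤ then -1 else α.toReal / (1 - α.toReal)

/-- `α/(α-1)`, with the convention that it equals `1` at `α = ∞`. -/
def aRatio' (α : ℝ≥0∞) : ℝ := if α = ⊤ then 1 else α.toReal / (α.toReal - 1)

/-- Rényi relative entropy `D_α(p‖r)`. -/
def relRenyi {X : Type*} [Fintype X] (α : ℝ≥0∞) (p r : X → ℝ) : ℝ :=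
  if α = 1 then ∑ x, p x * log2 (p x / r x)
  else if α = ⊤ then log2 (⨆ x, p x / r x)
  else (α.toReal - 1)⁻¹ * log2 (∑ x, p x ^ α.toReal * r x ^ (1 - α.toReal))

/-- The quantity `I_{t,τ}(P‖R)`. -/
def Ibulk {X Y : Type*} [Fintype X] [Fintype Y] (t : ℝ) (τ : Measure ℝ≥0∞)
    (P : Matrix X Y ℝ) (R : X → ℝ) : ℝ :=
  -t⁻¹ * log2 (∑ y ∈ Finset.univ.filter (fun y => 0 < margY P y),
    margY P y * exp2 (-t * ∫ α, relRenyi α (condX P y) R ∂τ))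

/-- The quantity `I_{-∞,τ}(P‖R)`. -/
def InegInf {X Y : Type*} [Fintype X] [Fintype Y] (τ : Measure ℝ≥0∞)
    (P : Matrix X Y ℝ) (R : X → ℝ) : ℝ :=
  sSup ((fun y => ∫ α, relRenyi α (condX P y) R ∂τ) '' {y | 0 < margY P y})

/-- A conditioned `R`-preserving channel maps `P` to `Q`. -/
def CondPreserving {X Y Y' : Type*} [Fintype X] [Fintype Y] [Fintype Y'] (R : X → ℝ)
    (P : Matrix X Y ℝ) (Q : Matrix X Y' ℝ) : Prop :=
  ∃ (k : ℕ) (G : Fin k → Matrix X X ℝ) (D : Fin k → Matrix Y Y' ℝ),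
    (∀ i a b, 0 ≤ G i a b) ∧
    (∀ i b, ∑ a, G i a b = 1) ∧
    (∀ i, (G i).mulVec R = R) ∧
    (∀ i a b, 0 ≤ D i a b) ∧
    (∀ a, ∑ b, ∑ i, D i a b = 1) ∧
    Q = ∑ i, G i * P * D i

/-- Total variation distance between two matrices. -/
def tvDist {X Y : Type*} [Fintype X] [Fintype Y] (P Q : Matrix X Y ℝ) : ℝ :=
  (1 / 2) * ∑ x, ∑ y, |P x y - Q x y|

lemma shift_condMixed (d n : ℕ) [NeZero n] (P' : Matrix (Fin n × Fin d) (Fin n) ℝ)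
    (v : Fin n → Fin n) :
    CondMixed P' (Matrix.of fun (p : Fin n × Fin d) (b : Fin n) => P' (p.1 + v b, p.2) b) := by
  refine ⟨n, fun j => Matrix.of fun p q => if q = (p.1 + v j, p.2) then 1 else 0,
    fun j => Matrix.of fun a b => if a = j ∧ b = j then 1 else 0, ?_, ?_, ?_, ?_⟩
  · intro j
    refine ⟨fun p q => by dsimp; positivity, fun p => ?_, fun q => ?_⟩
    · simp
    · have key : ∀ p : Fin n × Fin d, (q = (p.1 + v j, p.2)) ↔ (p = (q.1 - v j, q.2)) := by
        rintro ⟨i, x⟩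
        constructor
        · rintro rfl; simp
        · intro h'; rw [h']; simp
      simp only [Matrix.of_apply]
      rw [Finset.sum_congr rfl (fun p _ => by rw [if_congr (key p) rfl rfl])]
      simp
  · intro i a b; dsimp; positivity
  · intro a
    simp only [Matrix.of_apply]
    rw [Finset.sum_comm]
    have key : ∀ i b : Fin n, (if a = i ∧ b = i then (1:ℝ) else 0)
        = (if a = i then (if b = i then (1:ℝ) else 0) else 0) := by
      intro i b; by_cases h1 : a = i <;> simp [h1]
    simp [key]
  · funext p b
    simp only [Matrix.sum_apply, Matrix.mul_apply, Matrix.of_apply]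
    have : ∀ j : Fin n,
        (∑ a, (∑ q, (if q = (p.1 + v j, p.2) then (1:ℝ) else 0) * P' q a) *
          (if a = j ∧ b = j then 1 else 0))
        = if b = j then P' (p.1 + v j, p.2) j else 0 := by
      intro j
      by_cases hb : b = j
      · subst hb
        simp [Finset.sum_ite_eq, Finset.mul_sum, mul_comm]
      · simp [hb, fun a => (fun h : a = j ∧ b = j => hb h.2 : ¬(a = j ∧ b = j))]
    rw [Finset.sum_congr rfl (fun j _ => this j)]
    simp

/-- Shifting lemma. For a nonnegative `d×n` matrix `P` with columns
`P₁, …, Pₙ`, the `(dn)×n` block-diagonal matrix `P̃ = ⊕ᵢ Pᵢ` and the `(dn)×n` matrix `P̂`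
obtained from `P` by appending `(n-1)d` zero rows can each be obtained from the other by a
conditionally mixing channel.  (Rows are indexed by pairs `(i, x) : Fin n × Fin d`, the `i`-th
block consisting of the rows with first coordinate `i`.) -/
theorem shifting_lemma (d n : ℕ) (hn : 0 < n) (P : Matrix (Fin d) (Fin n) ℝ)
    (hP : ∀ i j, 0 ≤ P i j) :
    CondMixed
        (Matrix.of fun (p : Fin n × Fin d) (j : Fin n) =>
          if p.1 = (⟨0, hn⟩ : Fin n) then P p.2 j else 0)
        (Matrix.of fun (p : Fin n × Fin d) (j : Fin n) =>
          if p.1 = j then P p.2 j else 0) ∧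
      CondMixed
        (Matrix.of fun (p : Fin n × Fin d) (j : Fin n) =>
          if p.1 = j then P p.2 j else 0)
        (Matrix.of fun (p : Fin n × Fin d) (j : Fin n) =>
          if p.1 = (⟨0, hn⟩ : Fin n) then P p.2 j else 0) := by
  haveI : NeZero n := ⟨hn.ne'⟩
  have h0 : (⟨0, hn⟩ : Fin n) = 0 := rfl
  constructor
  · have h := shift_condMixed d n
      (Matrix.of fun (p : Fin n × Fin d) (j : Fin n) =>
        if p.1 = (⟨0, hn⟩ : Fin n) then P p.2 j else 0) (fun b => -b)
    convert h using 1
    funext p b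
    simp only [Matrix.of_apply, h0]
    have : p.1 + -b = 0 ↔ p.1 = b := by
      constructor
      · intro h'; have := add_eq_zero_iff_eq_neg.mp h'; simpa using this
      · intro h'; rw [h']; simp
    rw [if_congr this.symm rfl rfl]
  · have h := shift_condMixed d n
      (Matrix.of fun (p : Fin n × Fin d) (j : Fin n) =>
        if p.1 = j then P p.2 j else 0) (fun b => b)
    convert h using 1
    funext p b
    simp only [Matrix.of_apply, h0]
    have : p.1 + b = b ↔ p.1 = 0 := by
      constructor
      · intro h'; exact add_eq_right.mp (by rwa [add_comm] at h')
      · intro h'; rw [h', zero_add]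
    rw [if_congr this.symm rfl rfl]
end
end

section
/- Let R be a d×n matrix with nonnegative real entries. The following are equivalent: (i) the entries of R sum to 1 and every nonzero column of R has at least two nonzero entries; (ii) there exists r ∈ (0,1) such that the 2×1 column vector (r, 1−r)ᵀ conditionally majorizes R. -/
open MeasureTheory
open scoped ENNReal

noncomputable section

/-!
Conditional mixing preserves the total mass, and it cannot create a column with a single nonzero
entry out of columns with at least two positive entries: if a doubly stochastic `S` sent two
positive coordinates `z₁ ≠ z₂` of `p` into the single row `x₀`, the column sums would force
`S x₀ z₁ = S x₀ z₂ = 1`, overfilling row `x₀`.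

Conversely, pad `R` with two zero rows carrying `(r, 1 - r)`, where `r < 1` dominates every ratio
of an entry to its column sum. Each normalized column `q` then has `q ≤ r`, so
`q = r u + (1 - r) v` for probability vectors with `u + v ≤ 1` (take `u = v = q` if `q ≤ 1/2`,
and otherwise split off the unique entry above `1/2`). Such `u`, `v` are two columns of a doubly
stochastic matrix, and weighting these matrices by the column sums of `R` gives the channel.
-/

open Matrix Finset

lemma doublyStochastic_iff {X : Type*} [Fintype X] [DecidableEq X] {S : Matrix X X ℝ} :
    DoublyStochastic S ↔ S ∈ doublyStochastic ℝ X :=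
  mem_doublyStochastic_iff_sum.symm

def NoSingletonColumn {X Y : Type*} (P : Matrix X Y ℝ) : Prop :=
  ∀ y, (∃ x, P x y ≠ 0) → ∃ x₁ x₂, x₁ ≠ x₂ ∧ P x₁ y ≠ 0 ∧ P x₂ y ≠ 0

lemma totalMass_eq_dotProduct {X Y : Type*} [Fintype X] [Fintype Y] (P : Matrix X Y ℝ) :
    totalMass P = 1 ⬝ᵥ (P *ᵥ 1) := by
  simp [totalMass, dotProduct, mulVec]

lemma totalMass_eq_sum_prod {X Y : Type*} [Fintype X] [Fintype Y] (P : Matrix X Y ℝ) :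
    totalMass P = ∑ p : X × Y, P p.1 p.2 :=
  (Fintype.sum_prod_type' fun x y => P x y).symm

section Embeds

variable {X Y X' Y' : Type*} [Fintype X] [Fintype Y] [Fintype X'] [Fintype Y']
  {P : Matrix X Y ℝ} {P' : Matrix X' Y' ℝ}

lemma Embeds.totalMass_eq (h : Embeds P P') : totalMass P' = totalMass P := by
  obtain ⟨f, g, hfg, hsupp⟩ := h
  rw [totalMass_eq_sum_prod, totalMass_eq_sum_prod]
  refine (Fintype.sum_of_injective (Prod.map f g) (f.injective.prodMap g.injective)
    (fun p => P p.1 p.2) (fun p => P' p.1 p.2) (fun p hp => ?_) fun p => (hfg p.1 p.2).symm).symm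
  by_contra hne
  obtain ⟨⟨x, hx⟩, ⟨y, hy⟩⟩ := hsupp p.1 p.2 hne
  exact hp ⟨(x, y), Prod.ext hx hy⟩

lemma Embeds.nonneg (h : Embeds P P') (hP : ∀ x y, 0 ≤ P x y) : ∀ x' y', 0 ≤ P' x' y' := by
  obtain ⟨f, g, hfg, hsupp⟩ := h
  intro x' y'
  by_cases hne : P' x' y' = 0
  · exact hne.ge
  · obtain ⟨⟨x, rfl⟩, ⟨y, rfl⟩⟩ := hsupp x' y' hne
    exact (hfg x y).symm ▸ hP x y

lemma Embeds.noSingletonColumn_iff (h : Embeds P P') :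
    NoSingletonColumn P' ↔ NoSingletonColumn P := by
  obtain ⟨f, g, hfg, hsupp⟩ := h
  constructor
  · rintro hP' y ⟨x, hx⟩
    obtain ⟨x₁', x₂', hne, h₁, h₂⟩ := hP' (g y) ⟨f x, by rwa [hfg]⟩
    obtain ⟨⟨x₁, rfl⟩, -⟩ := hsupp _ _ h₁
    obtain ⟨⟨x₂, rfl⟩, -⟩ := hsupp _ _ h₂
    exact ⟨x₁, x₂, fun h => hne (h ▸ rfl), by rwa [← hfg], by rwa [← hfg]⟩
  · rintro hP y' ⟨x', hx'⟩
    obtain ⟨⟨x, rfl⟩, ⟨y, rfl⟩⟩ := hsupp x' y' hx'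
    obtain ⟨x₁, x₂, hne, h₁, h₂⟩ := hP y ⟨x, by rwa [← hfg]⟩
    exact ⟨f x₁, f x₂, f.injective.ne hne, by rwa [hfg], by rwa [hfg]⟩

end Embeds

section DoublyStochastic

variable {X : Type*} [Fintype X] {S : Matrix X X ℝ}

lemma DoublyStochastic.eq_one_of_forall_ne_eq_zero (hS : DoublyStochastic S) {x₀ z : X}
    (h : ∀ x ≠ x₀, S x z = 0) : S x₀ z = 1 := by
  rw [← hS.2.2 z, Fintype.sum_eq_single x₀ h]

lemma DoublyStochastic.exists_ne_mulVec_ne_zero (hS : DoublyStochastic S) {p : X → ℝ}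
    (hp : ∀ z, 0 ≤ p z) {z₁ z₂ : X} (hz : z₁ ≠ z₂) (h₁ : 0 < p z₁) (h₂ : 0 < p z₂) (x₀ : X) :
    ∃ x ≠ x₀, (S *ᵥ p) x ≠ 0 := by
  classical
  by_contra! h
  have hcol {z : X} (hz : 0 < p z) : S x₀ z = 1 := hS.eq_one_of_forall_ne_eq_zero fun x hx => by
    have := (Fintype.sum_eq_zero_iff_of_nonneg fun z => mul_nonneg (hS.1 x z) (hp z)).1 (h x hx)
    exact (mul_eq_zero.1 (congrFun this z)).resolve_right hz.ne'
  have := sum_le_sum_of_subset_of_nonneg (subset_univ {z₁, z₂}) fun z _ _ => hS.1 x₀ z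
  rw [sum_pair hz, hcol h₁, hcol h₂, hS.2.1 x₀] at this
  norm_num at this

end DoublyStochastic

section CondMixed

variable {X Y Y' : Type*} [Fintype X] [Fintype Y] [Fintype Y']
  {P : Matrix X Y ℝ} {Q : Matrix X Y' ℝ}

lemma CondMixed.totalMass_eq (h : CondMixed P Q) : totalMass Q = totalMass P := by
  classical
  obtain ⟨k, S, D, hS, -, hD, rfl⟩ := h
  have hD1 : (∑ i, D i) *ᵥ 1 = 1 := by
    ext a
    simpa [mulVec, dotProduct, Matrix.sum_apply] using hD a
  have hS1 (i : Fin k) : 1 ᵥ* S i = 1 :=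
    one_vecMul_of_mem_doublyStochastic (doublyStochastic_iff.1 (hS i))
  rw [totalMass_eq_dotProduct, totalMass_eq_dotProduct, dotProduct_mulVec, vecMul_sum]
  simp_rw [← vecMul_vecMul, hS1]
  rw [← vecMul_sum, ← dotProduct_mulVec, hD1, dotProduct_mulVec]

lemma CondMixed.exists_mulVec_col (h : CondMixed P Q) (hP : ∀ x y, 0 ≤ P x y) {x₀ : X} {b : Y'}
    (hb : Q x₀ b ≠ 0) (hb' : ∀ x ≠ x₀, Q x b = 0) :
    ∃ S, DoublyStochastic S ∧ ∃ y,
      (S *ᵥ fun z => P z y) x₀ ≠ 0 ∧ ∀ x ≠ x₀, (S *ᵥ fun z => P z y) x = 0 := by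
  obtain ⟨k, S, D, hS, hD, -, rfl⟩ := h
  have hQ (x : X) : (∑ i, S i * P * D i) x b =
      ∑ iy : Fin k × Y, (S iy.1 *ᵥ fun z => P z iy.2) x * D iy.1 iy.2 b := by
    simp [Matrix.sum_apply, Matrix.mul_apply, Fintype.sum_prod_type, mulVec, dotProduct]
  have hnn (x : X) : 0 ≤ fun iy : Fin k × Y => (S iy.1 *ᵥ fun z => P z iy.2) x * D iy.1 iy.2 b :=
    fun iy => mul_nonneg (sum_nonneg fun z _ => mul_nonneg ((hS _).1 _ _) (hP _ _)) (hD _ _ _)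
  obtain ⟨⟨i, y⟩, -, hiy⟩ := exists_ne_zero_of_sum_ne_zero (hQ x₀ ▸ hb)
  refine ⟨S i, hS i, y, left_ne_zero_of_mul hiy, fun x hx => ?_⟩
  have := (Fintype.sum_eq_zero_iff_of_nonneg (hnn x)).1 (hQ x ▸ hb' x hx)
  exact (mul_eq_zero.1 (congrFun this (i, y))).resolve_right (right_ne_zero_of_mul hiy)

lemma CondMixed.noSingletonColumn (h : CondMixed P Q) (hP : ∀ x y, 0 ≤ P x y)
    (hP' : NoSingletonColumn P) : NoSingletonColumn Q := by
  rintro b ⟨x₀, hx₀⟩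
  by_contra! hsingle
  obtain ⟨S, hS, y, hy₀, hy⟩ :=
    h.exists_mulVec_col hP hx₀ fun x hx => hsingle x₀ x (Ne.symm hx) hx₀
  have hcol : ∃ z, P z y ≠ 0 := by
    by_contra! h0
    exact hy₀ (by simp [show (fun z => P z y) = 0 from funext h0])
  obtain ⟨z₁, z₂, hz, h₁, h₂⟩ := hP' y hcol
  obtain ⟨x, hx, hne⟩ := hS.exists_ne_mulVec_ne_zero (fun z => hP z y) hz
    ((hP z₁ y).lt_of_ne' h₁) ((hP z₂ y).lt_of_ne' h₂) x₀
  exact hne (hy x hx)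

end CondMixed

section CondMajorizes

variable {X Y X' Y' : Type*} [Fintype X] [Fintype Y] [Fintype X'] [Fintype Y']
  {P : Matrix X Y ℝ} {Q : Matrix X' Y' ℝ}

lemma CondMajorizes.totalMass_eq (h : CondMajorizes P Q) : totalMass Q = totalMass P := by
  obtain ⟨m, n, n', P', Q', hP, hQ, hPQ⟩ := h
  rw [← hQ.totalMass_eq, hPQ.totalMass_eq, hP.totalMass_eq]

lemma CondMajorizes.noSingletonColumn (h : CondMajorizes P Q) (hP₀ : ∀ x y, 0 ≤ P x y)
    (hP : NoSingletonColumn P) : NoSingletonColumn Q := by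
  obtain ⟨m, n, n', P', Q', hPP', hQQ', hPQ⟩ := h
  exact hQQ'.noSingletonColumn_iff.1
    (hPQ.noSingletonColumn (hPP'.nonneg hP₀) (hPP'.noSingletonColumn_iff.2 hP))

end CondMajorizes

lemma embeds_of_forall_row {X Y X' : Type*} [Fintype X] [Fintype Y] [Fintype X']
    {P : Matrix X Y ℝ} {P' : Matrix X' Y ℝ} (f : X ↪ X') (h : ∀ x, P' (f x) = P x)
    (h₀ : ∀ x', (∀ x, f x ≠ x') → P' x' = 0) : Embeds P P' := by
  refine ⟨f, Function.Embedding.refl Y, fun x y => congrFun (h x) y, fun x' y hne => ?_⟩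
  refine ⟨?_, y, rfl⟩
  by_contra! hx'
  exact hne (congrFun (h₀ x' hx') y)

lemma embeds_append_zero {m k : ℕ} {Y : Type*} [Fintype Y] (A : Matrix (Fin m) Y ℝ) :
    Embeds A (Fin.append A 0 : Matrix (Fin (m + k)) Y ℝ) :=
  embeds_of_forall_row (Fin.castAddEmb k) (Fin.append_left A 0) fun x' hx' => by
    induction x' using Fin.addCases with
    | left i => exact absurd rfl (hx' i)
    | right i => exact Fin.append_right A 0 i

lemma embeds_zero_append {m k : ℕ} {Y : Type*} [Fintype Y] (B : Matrix (Fin k) Y ℝ) :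
    Embeds B (Fin.append 0 B : Matrix (Fin (m + k)) Y ℝ) :=
  embeds_of_forall_row (Fin.natAddEmb m) (Fin.append_right 0 B) fun x' hx' => by
    induction x' using Fin.addCases with
    | left i => exact Fin.append_left 0 B i
    | right i => exact absurd rfl (hx' i)

lemma condMixed_of_forall_col {Z : Type*} [Fintype Z] {n : ℕ} {P : Matrix Z (Fin 1) ℝ}
    {Q : Matrix Z (Fin n) ℝ} {w : Fin n → ℝ} (hw₀ : ∀ j, 0 ≤ w j) (hw : ∑ j, w j = 1)
    {S : Fin n → Matrix Z Z ℝ} (hS : ∀ j, DoublyStochastic (S j))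
    (hQ : ∀ x j, Q x j = w j * (S j * P) x 0) : CondMixed P Q := by
  refine ⟨n, S, fun j => Matrix.single 0 j (w j), hS, fun j a b => ?_, fun a => ?_, ?_⟩
  · simp only [single_apply]
    split_ifs
    exacts [hw₀ j, le_rfl]
  · simpa [single_apply, Fin.fin_one_eq_zero a] using hw
  · ext x j
    simp [Matrix.sum_apply, Matrix.mul_apply, single_apply, hQ, mul_comm]

section ProbVec

variable {Z : Type*} [Fintype Z]

lemma IsProbVec.le_one {u : Z → ℝ} (hu : IsProbVec u) (x : Z) : u x ≤ 1 :=
  hu.2 ▸ single_le_sum (fun y _ => hu.1 y) (mem_univ x)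

lemma IsProbVec.convexComb {u v : Z → ℝ} (hu : IsProbVec u) (hv : IsProbVec v) {t : ℝ}
    (ht₀ : 0 ≤ t) (ht₁ : t ≤ 1) : IsProbVec fun x => t * u x + (1 - t) * v x := by
  refine ⟨fun x => add_nonneg (mul_nonneg ht₀ (hu.1 x)) (mul_nonneg (by linarith) (hv.1 x)), ?_⟩
  rw [sum_add_distrib, ← mul_sum, ← mul_sum, hu.2, hv.2]
  ring

lemma isProbVec_single [DecidableEq Z] (x₀ : Z) : IsProbVec (Pi.single x₀ (1 : ℝ)) :=
  ⟨fun x => by by_cases h : x = x₀ <;> simp [h], by simp⟩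

lemma IsProbVec.exists_eq_mix_single [DecidableEq Z] {q : Z → ℝ} (hq : IsProbVec q) {x₀ : Z}
    (hx₀ : q x₀ < 1) : ∃ ρ : Z → ℝ, IsProbVec ρ ∧ ρ x₀ = 0 ∧
      ∀ x, q x = q x₀ * (Pi.single x₀ 1 : Z → ℝ) x + (1 - q x₀) * ρ x := by
  have hpos : 0 < 1 - q x₀ := by linarith
  refine ⟨fun x => (1 - q x₀)⁻¹ * (q x - (Pi.single x₀ (q x₀) : Z → ℝ) x), ⟨fun x => ?_, ?_⟩, by simp,
    fun x => ?_⟩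
  · by_cases h : x = x₀
    · simp [h]
    · simpa [h] using mul_nonneg (inv_nonneg.2 hpos.le) (hq.1 x)
  · rw [← mul_sum, sum_sub_distrib, sum_pi_single', if_pos (mem_univ _), hq.2,
      inv_mul_cancel₀ hpos.ne']
  · rw [← mul_assoc, mul_inv_cancel₀ hpos.ne']
    by_cases h : x = x₀ <;> simp [h]

lemma exists_mix_eq_mix {e ρ : Z → ℝ} (he : IsProbVec e) (hρ : IsProbVec ρ)
    (heρ : ∀ x, e x + ρ x ≤ 1) {r s : ℝ} (hs₁ : 1 - r ≤ s) (hs₂ : s ≤ r) :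
    ∃ u v : Z → ℝ, IsProbVec u ∧ IsProbVec v ∧ (∀ x, u x + v x ≤ 1) ∧
      ∀ x, r * u x + (1 - r) * v x = s * e x + (1 - s) * ρ x := by
  -- `t` solves `r t + (1 - r) (1 - t) = s`; at `r = 1/2` the division yields `t = 0`, which is
  -- still fine because then `s = 1/2`.
  set t := (s - (1 - r)) / (2 * r - 1)
  have ht : (2 * r - 1) * t = s - (1 - r) := by
    rcases eq_or_ne (2 * r - 1) 0 with h | h
    · rw [h, zero_mul]; linarith
    · exact mul_div_cancel₀ _ h
  have ht₀ : 0 ≤ t := div_nonneg (by linarith) (by linarith)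
  have ht₁ : t ≤ 1 := div_le_one_of_le₀ (by linarith) (by linarith)
  refine ⟨fun x => t * e x + (1 - t) * ρ x, fun x => (1 - t) * e x + (1 - (1 - t)) * ρ x,
    he.convexComb hρ ht₀ ht₁, he.convexComb hρ (by linarith) (by linarith),
    fun x => by linarith [heρ x], fun x => by linear_combination (e x - ρ x) * ht⟩

lemma IsProbVec.exists_mix_eq {q : Z → ℝ} (hq : IsProbVec q) {r : ℝ} (hr : r < 1)
    (hqr : ∀ x, q x ≤ r) :
    ∃ u v : Z → ℝ, IsProbVec u ∧ IsProbVec v ∧ (∀ x, u x + v x ≤ 1) ∧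
      ∀ x, r * u x + (1 - r) * v x = q x := by
  classical
  by_cases hhalf : ∀ x, q x ≤ 1 / 2
  · exact ⟨q, q, hq, hq, fun x => by linarith [hhalf x], fun x => by ring⟩
  obtain ⟨x₀, hx₀⟩ : ∃ x₀, 1 / 2 < q x₀ := by simpa using hhalf
  obtain ⟨ρ, hρ, hρx₀, hqρ⟩ := hq.exists_eq_mix_single (x₀ := x₀) (by linarith [hqr x₀])
  have heρ (x : Z) : (Pi.single x₀ 1 : Z → ℝ) x + ρ x ≤ 1 := by
    by_cases h : x = x₀
    · simp [h, hρx₀]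
    · simpa [h] using hρ.le_one x
  obtain ⟨u, v, hu, hv, huv, hmix⟩ := exists_mix_eq_mix (isProbVec_single x₀) hρ heρ
    (by linarith [hqr x₀]) (hqr x₀)
  exact ⟨u, v, hu, hv, huv, fun x => (hmix x).trans (hqρ x).symm⟩

end ProbVec

section Completion

variable {Z : Type*} [Fintype Z] [DecidableEq Z]

lemma exists_doublyStochastic_col_eq (hZ : 2 < Fintype.card Z) {a b : Z} (hab : a ≠ b)
    {u v : Z → ℝ} (hu : IsProbVec u) (hv : IsProbVec v) (huv : ∀ x, u x + v x ≤ 1) :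
    ∃ S : Matrix Z Z ℝ, DoublyStochastic S ∧ ∀ x, S x a = u x ∧ S x b = v x := by
  set c : ℝ := Fintype.card Z - 2
  have hc : 0 < c := by
    have : (2 : ℝ) < Fintype.card Z := by exact_mod_cast hZ
    linarith
  have hcard : (((univ : Finset Z).erase a).erase b).card = c := by
    rw [card_erase_of_mem (mem_erase.2 ⟨hab.symm, mem_univ b⟩), card_erase_of_mem (mem_univ a),
      card_univ]
    simp only [c]
    rw [Nat.cast_sub (by omega), Nat.cast_sub (by omega)]
    ring
  -- the remaining mass `1 - u x - v x` of row `x` is spread evenly over the other columns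
  refine ⟨Matrix.of fun x y =>
    if y = a then u x else if y = b then v x else (1 - u x - v x) / c, ⟨fun x y => ?_, fun x => ?_,
    fun y => ?_⟩, fun x => by simp [hab.symm]⟩
  · dsimp only [of_apply]
    split_ifs
    exacts [hu.1 x, hv.1 x, div_nonneg (by linarith [huv x]) hc.le]
  · rw [← add_sum_erase _ _ (mem_univ a), ← add_sum_erase _ _ (mem_erase.2 ⟨hab.symm, mem_univ b⟩),
      sum_congr rfl fun y hy => by
        rw [of_apply, if_neg (ne_of_mem_erase (mem_of_mem_erase hy)), if_neg (ne_of_mem_erase hy)],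
      sum_const, nsmul_eq_mul, hcard]
    simp only [of_apply, if_pos, if_neg hab.symm]
    field_simp
    ring
  · by_cases hya : y = a
    · simpa [hya] using hu.2
    by_cases hyb : y = b
    · simpa [hyb, hab.symm] using hv.2
    simp only [of_apply, if_neg hya, if_neg hyb, ← sum_div, sum_sub_distrib, hu.2, hv.2, sum_const,
      card_univ]
    field_simp
    simp only [c, nsmul_eq_mul, mul_one]
    ring

lemma exists_doublyStochastic_mix_eq (hZ : 2 < Fintype.card Z) {a b : Z} (hab : a ≠ b)
    {c : Z → ℝ} (hc : ∀ x, 0 ≤ c x) {r : ℝ} (hr : r < 1) (hcr : ∀ x, c x ≤ r * ∑ y, c y) :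
    ∃ S : Matrix Z Z ℝ, DoublyStochastic S ∧
      ∀ x, c x = (∑ y, c y) * (r * S x a + (1 - r) * S x b) := by
  rcases (sum_nonneg fun y _ => hc y).eq_or_lt with hsum | hsum
  · refine ⟨1, doublyStochastic_iff.2 (one_mem _), fun x => ?_⟩
    rw [← hsum, zero_mul]
    exact (Fintype.sum_eq_zero_iff_of_nonneg hc).1 hsum.symm ▸ rfl
  set q := fun x => c x / ∑ y, c y
  have hq : IsProbVec q :=
    ⟨fun x => div_nonneg (hc x) hsum.le, by rw [← sum_div, div_self hsum.ne']⟩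
  obtain ⟨u, v, hu, hv, huv, hmix⟩ :=
    hq.exists_mix_eq hr fun x => (div_le_iff₀ hsum).2 (hcr x)
  obtain ⟨S, hS, hSuv⟩ := exists_doublyStochastic_col_eq hZ hab hu hv huv
  refine ⟨S, hS, fun x => ?_⟩
  rw [(hSuv x).1, (hSuv x).2, hmix x, mul_div_cancel₀ _ hsum.ne']

end Completion

lemma exists_mem_Ioo_forall_le {ι : Type*} [Finite ι] {f : ι → ℝ} (hf : ∀ i, f i < 1) :
    ∃ r ∈ Set.Ioo (0 : ℝ) 1, ∀ i, f i ≤ r := by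
  cases isEmpty_or_nonempty ι
  · exact ⟨1 / 2, by norm_num, isEmptyElim⟩
  obtain ⟨i₀, hi₀⟩ := Finite.exists_max f
  exact ⟨max (1 / 2) (f i₀), ⟨by positivity, max_lt (by norm_num) (hf i₀)⟩,
    fun i => (hi₀ i).trans (le_max_right _ _)⟩

section NoSingletonColumn

variable {X Y : Type*} [Fintype X] {R : Matrix X Y ℝ}

lemma margY_nonneg (hR₀ : ∀ x y, 0 ≤ R x y) (y : Y) : 0 ≤ margY R y :=
  sum_nonneg fun x _ => hR₀ x y

lemma NoSingletonColumn.lt_margY (hR : NoSingletonColumn R) (hR₀ : ∀ x y, 0 ≤ R x y) {y : Y}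
    (hy : margY R y ≠ 0) (x : X) : R x y < margY R y := by
  classical
  obtain ⟨x₁, x₂, hne, h₁, h₂⟩ := hR y (by
    by_contra! h
    exact hy (sum_eq_zero fun x _ => h x))
  obtain ⟨x', hx', hpos⟩ : ∃ x', x' ≠ x ∧ 0 < R x' y := by
    by_cases h : x₁ = x
    · exact ⟨x₂, h ▸ hne.symm, (hR₀ x₂ y).lt_of_ne' h₂⟩
    · exact ⟨x₁, h, (hR₀ x₁ y).lt_of_ne' h₁⟩
  have := sum_le_sum_of_subset_of_nonneg (subset_univ {x, x'}) fun z _ _ => hR₀ z y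
  rw [sum_pair hx'.symm] at this
  exact (lt_add_of_pos_right _ hpos).trans_le this

lemma NoSingletonColumn.exists_le_mul_margY [Finite Y] (hR : NoSingletonColumn R)
    (hR₀ : ∀ x y, 0 ≤ R x y) : ∃ r ∈ Set.Ioo (0 : ℝ) 1, ∀ x y, R x y ≤ r * margY R y := by
  have hm := margY_nonneg hR₀
  obtain ⟨r, hr, hle⟩ := exists_mem_Ioo_forall_le (f := fun p : X × Y => R p.1 p.2 / margY R p.2)
    fun p => by
      rcases eq_or_ne (margY R p.2) 0 with h | h
      · simp [h]
      · exact (div_lt_one ((hm p.2).lt_of_ne' h)).2 (hR.lt_margY hR₀ h p.1)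
  refine ⟨r, hr, fun x y => ?_⟩
  rcases eq_or_ne (margY R y) 0 with h | h
  · rw [h, mul_zero, ← h]
    exact single_le_sum (fun z _ => hR₀ z y) (mem_univ x)
  · exact (div_le_iff₀ ((hm y).lt_of_ne' h)).1 (hle (x, y))

end NoSingletonColumn

lemma exists_doublyStochastic_append_eq {d n : ℕ} {R : Matrix (Fin d) (Fin n) ℝ} (hd : 0 < d)
    (hR₀ : ∀ i j, 0 ≤ R i j) {r : ℝ} (hr : r ∈ Set.Ioo (0 : ℝ) 1)
    (hRr : ∀ i j, R i j ≤ r * margY R j) {P' : Matrix (Fin (d + 2)) (Fin 1) ℝ}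
    {Q' : Matrix (Fin (d + 2)) (Fin n) ℝ}
    (hP' : P' = Fin.append 0 (Matrix.of fun (i : Fin 2) (_ : Fin 1) => if i = 0 then r else 1 - r))
    (hQ' : Q' = Fin.append R 0) (j : Fin n) :
    ∃ S : Matrix (Fin (d + 2)) (Fin (d + 2)) ℝ, DoublyStochastic S ∧
      ∀ x, Q' x j = margY R j * (S * P') x 0 := by
  have hQ'l (i : Fin d) : Q' (Fin.castAdd 2 i) j = R i j := by
    subst hQ'; exact congrFun (Fin.append_left R 0 i) j
  have hQ'r (i : Fin 2) : Q' (Fin.natAdd d i) j = 0 := by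
    subst hQ'; exact congrFun (Fin.append_right R 0 i) j
  have hP'l (i : Fin d) : P' (Fin.castAdd 2 i) 0 = 0 := by
    subst hP'; exact congrFun (Fin.append_left 0 _ i) 0
  have hP'r (i : Fin 2) : P' (Fin.natAdd d i) 0 = if i = 0 then r else 1 - r := by
    subst hP'; exact congrFun (Fin.append_right 0 _ i) 0
  have hQ'sum : ∑ x, Q' x j = margY R j := by simp [Fin.sum_univ_add, hQ'l, hQ'r, margY]
  have hQ'₀ (x) : 0 ≤ Q' x j := by
    induction x using Fin.addCases <;> simp [hQ'l, hQ'r, hR₀]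
  have hQ'le (x) : Q' x j ≤ r * ∑ x, Q' x j := by
    rw [hQ'sum]
    induction x using Fin.addCases
    · simpa [hQ'l] using hRr _ j
    · simpa [hQ'r] using mul_nonneg hr.1.le (margY_nonneg hR₀ j)
  obtain ⟨S, hS, hSQ⟩ := exists_doublyStochastic_mix_eq (a := Fin.natAdd d 0)
    (b := Fin.natAdd d 1) (by rw [Fintype.card_fin]; omega) (by simp) hQ'₀ hr.2 hQ'le
  refine ⟨S, hS, fun x => ?_⟩
  rw [hSQ x, hQ'sum]
  simp [Matrix.mul_apply, Fin.sum_univ_add, hP'l, hP'r, mul_comm]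

lemma NoSingletonColumn.exists_condMajorizes {d n : ℕ} {R : Matrix (Fin d) (Fin n) ℝ}
    (hR : NoSingletonColumn R) (hR₀ : ∀ i j, 0 ≤ R i j) (hmass : totalMass R = 1) :
    ∃ r ∈ Set.Ioo (0 : ℝ) 1,
      CondMajorizes (Matrix.of fun (i : Fin 2) (_ : Fin 1) => if i = 0 then r else 1 - r) R := by
  obtain ⟨r, hr, hRr⟩ := hR.exists_le_mul_margY hR₀
  have hd : 0 < d := by
    rcases Nat.eq_zero_or_pos d with rfl | hd
    · simp [totalMass] at hmass
    · exact hd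
  choose S hS hSQ using exists_doublyStochastic_append_eq hd hR₀ hr hRr rfl rfl
  exact ⟨r, hr, d + 2, 1, n, _, _, embeds_zero_append _, embeds_append_zero R,
    condMixed_of_forall_col (margY_nonneg hR₀) (hmass ▸ sum_comm) hS fun x j => hSQ j x⟩

/-- Characterization of power universal elements: a nonnegative `d×n` matrix
`R` has total mass `1` and every nonzero column of `R` has at least two nonzero entries if and
only if there is `r ∈ (0,1)` such that the column vector `(r, 1-r)ᵀ` conditionally
majorizes `R`. -/
theorem power_universal_characterization (d n : ℕ)
    (R : Matrix (Fin d) (Fin n) ℝ) (hR : ∀ i j, 0 ≤ R i j) :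
    (totalMass R = 1 ∧
      ∀ j, (∃ i, R i j ≠ 0) → ∃ i₁ i₂, i₁ ≠ i₂ ∧ R i₁ j ≠ 0 ∧ R i₂ j ≠ 0) ↔
    (∃ r : ℝ, r ∈ Set.Ioo (0 : ℝ) 1 ∧
      CondMajorizes
        (Matrix.of fun (i : Fin 2) (_ : Fin 1) => if i = 0 then r else 1 - r) R) := by
  refine ⟨fun ⟨hmass, hcol⟩ => NoSingletonColumn.exists_condMajorizes hcol hR hmass,
    fun ⟨r, ⟨hr₀, hr₁⟩, hmaj⟩ => ⟨?_, hmaj.noSingletonColumn ?_ ?_⟩⟩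
  · rw [hmaj.totalMass_eq]
    simp [totalMass, Fin.sum_univ_two]
  · intro i j
    fin_cases i <;> simp [hr₀.le, hr₁.le]
  · intro j _
    exact ⟨0, 1, by decide, by simp [hr₀.ne'], by simpa using (sub_pos.2 hr₁).ne'⟩
end
end

section
/- Let d, N ∈ ℕ, let α₁ < ⋯ < α_N be points of [0,∞], let τ₁,…,τ_N > 0 with ∑_{ℓ=1}^N τℓ = 1, let t ∈ ℝ∖{0}, and define f : (ℝ≥0)^d ∖ {0} → ℝ by f(x) = ‖x‖₁ · exp₂( t·∑_{ℓ=1}^N τℓ·H_{αℓ}(x/‖x‖₁) ), where ‖x‖₁ = ∑_i x_i. Then: (1) f is concave whenever t > 0, αℓ < 1 for all ℓ, and ∑_{ℓ=1}^N τℓ·αℓ/(1−αℓ) ≤ 1/t; (2) f is convex whenever t < 0 and either (a) αℓ ≤ 1 for all ℓ, or (b) αℓ < 1 for all ℓ ≤ N−1, α_N ∈ (1,∞], and ∑_{ℓ=1}^N τℓ·αℓ/(1−αℓ) ≤ 1/t, with the convention that α/(1−α) = −1 for α = ∞. -/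
open MeasureTheory
open scoped ENNReal

noncomputable section

/-!
The function is the perspective `x ↦ ‖x‖₁ · Φ (x / ‖x‖₁)` of `Φ p = 2 ^ (t ∑ τℓ H_{αℓ}(p))`, so it
is positively homogeneous of degree one, and on the cone `x > 0` concavity and convexity amount to
superadditivity and subadditivity.

If all `αℓ ≤ 1` and `t < 0`, then `Φ` is convex on the simplex, since Rényi entropies of order at
most one are concave, and the perspective of a convex function is convex.

Otherwise no `αℓ` equals one, and `H_α(x / ‖x‖₁) = α / (1 - α) · log (‖x‖_α / ‖x‖₁)` for `α ≠ 0`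
(with `‖x‖_∞ = max x`), while `H_0` is the logarithm of the support size. With
`wℓ = t τℓ αℓ / (1 - αℓ)` the function becomes a product of powers of support sizes, which are
monotone along `x ↦ x + y`, and of the monomial `‖x‖₁ ^ (1 - ∑ wℓ) ∏ ‖x‖_{αℓ} ^ wℓ`, whose exponents
sum to one. In (1) all exponents are nonnegative and all these norms are superadditive (reverse
Minkowski for `α < 1`), and a weighted geometric mean of superadditive functions is superadditive.
In (2b) the only positive exponent sits on the subadditive `‖x‖_{α_N}`; expressing `‖x‖_{α_N}` as a
weighted geometric mean of the monomial and of the other norms turns the same inequality into a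
Radon-type subadditivity of the monomial.
-/

open Set

theorem exp2_mul_log2 {r : ℝ} (hr : 0 < r) (c : ℝ) : exp2 (c * log2 r) = r ^ c := by
  rw [exp2, log2, mul_comm, Real.rpow_mul zero_le_two, Real.rpow_logb two_pos (by norm_num) hr]

theorem exp2_sum {κ : Type*} [Fintype κ] (g : κ → ℝ) : exp2 (∑ ℓ, g ℓ) = ∏ ℓ, exp2 (g ℓ) :=
  Real.rpow_sum_of_pos two_pos _ _

theorem concaveOn_log2 : ConcaveOn ℝ (Ioi 0) log2 := by
  have h : log2 = fun z => (Real.log 2)⁻¹ • Real.log z := by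
    funext z
    simp [log2, Real.logb, div_eq_inv_mul]
  rw [h]
  exact strictConcaveOn_log_Ioi.concaveOn.smul (inv_nonneg.2 (Real.log_nonneg one_le_two))

section Convexity

variable {E : Type*} [AddCommGroup E] [Module ℝ E] {s : Set E} {f : E → ℝ}

theorem ConcaveOn.of_superadditive (hs : Convex ℝ s)
    (hsmul : ∀ x ∈ s, ∀ c : ℝ, 0 < c → c • x ∈ s)
    (hhom : ∀ x ∈ s, ∀ c : ℝ, 0 < c → f (c • x) = c * f x)
    (hadd : ∀ x ∈ s, ∀ y ∈ s, f x + f y ≤ f (x + y)) : ConcaveOn ℝ s f := by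
  refine concaveOn_iff_forall_pos.2 ⟨hs, fun x hx y hy a b ha hb _ => ?_⟩
  simpa only [smul_eq_mul, hhom x hx a ha, hhom y hy b hb] using
    hadd _ (hsmul x hx a ha) _ (hsmul y hy b hb)

theorem ConvexOn.of_subadditive (hs : Convex ℝ s)
    (hsmul : ∀ x ∈ s, ∀ c : ℝ, 0 < c → c • x ∈ s)
    (hhom : ∀ x ∈ s, ∀ c : ℝ, 0 < c → f (c • x) = c * f x)
    (hadd : ∀ x ∈ s, ∀ y ∈ s, f (x + y) ≤ f x + f y) : ConvexOn ℝ s f := by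
  refine neg_concaveOn_iff.1 (ConcaveOn.of_superadditive hs hsmul (fun x hx c hc => ?_)
    fun x hx y hy => ?_)
  · simp [hhom x hx c hc]
  · simpa [neg_add, add_comm] using neg_le_neg (hadd x hx y hy)

theorem ConvexOn.exp2_comp {g : E → ℝ} (hg : ConvexOn ℝ s g) :
    ConvexOn ℝ s (fun x => exp2 (g x)) := by
  refine ⟨hg.1, fun x hx y hy a b ha hb hab => ?_⟩
  calc exp2 (g (a • x + b • y)) ≤ exp2 (a • g x + b • g y) :=
        Real.rpow_le_rpow_of_exponent_le one_le_two (hg.2 hx hy ha hb hab)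
    _ ≤ a • exp2 (g x) + b • exp2 (g y) :=
        (convexOn_rpow_left two_pos).2 (mem_univ _) (mem_univ _) ha hb hab

theorem ConcaveOn.log2_comp {g : E → ℝ} (hg : ConcaveOn ℝ s g) (hpos : ∀ x ∈ s, 0 < g x) :
    ConcaveOn ℝ s (fun x => log2 (g x)) := by
  refine ⟨hg.1, fun x hx y hy a b ha hb hab => ?_⟩
  calc a • log2 (g x) + b • log2 (g y) ≤ log2 (a • g x + b • g y) :=
        concaveOn_log2.2 (hpos x hx) (hpos y hy) ha hb hab
    _ ≤ log2 (g (a • x + b • y)) :=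
        Real.logb_le_logb_of_le one_lt_two
          (convex_Ioi (0 : ℝ) (hpos x hx) (hpos y hy) ha hb hab) (hg.2 hx hy ha hb hab)

end Convexity

theorem setOf_nonneg_ne_zero_eq_Ioi {ι : Type*} :
    {x : ι → ℝ | (∀ i, 0 ≤ x i) ∧ x ≠ 0} = Ioi 0 := by
  ext x
  simp [lt_iff_le_and_ne, Pi.le_def, eq_comm]

section Perspective

variable {ι : Type*} [Fintype ι]

def perspective (Φ : (ι → ℝ) → ℝ) (x : ι → ℝ) : ℝ :=
  (∑ i, x i) * Φ (fun i => x i / ∑ j, x j)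

theorem perspective_smul (Φ : (ι → ℝ) → ℝ) (c : ℝ) (x : ι → ℝ) :
    perspective Φ (c • x) = c * perspective Φ x := by
  rcases eq_or_ne c 0 with rfl | hc
  · simp [perspective]
  have hnorm : (fun i => (c • x) i / ∑ j, (c • x) j) = fun i => x i / ∑ j, x j := by
    funext i
    simp only [Pi.smul_apply, smul_eq_mul, ← Finset.mul_sum]
    exact mul_div_mul_left _ _ hc
  rw [perspective, perspective, hnorm]
  simp only [Pi.smul_apply, smul_eq_mul, ← Finset.mul_sum, mul_assoc]

theorem normalize_mem_stdSimplex {x : ι → ℝ} (hx : 0 < x) :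
    (fun i => x i / ∑ j, x j) ∈ stdSimplex ℝ ι :=
  ⟨fun i => div_nonneg (hx.le i) (Fintype.sum_pos hx).le,
    by rw [← Finset.sum_div, div_self (Fintype.sum_pos hx).ne']⟩

theorem concaveOn_perspective_of_superadditive {Φ : (ι → ℝ) → ℝ}
    (h : ∀ x y : ι → ℝ, 0 < x → 0 < y → perspective Φ x + perspective Φ y ≤ perspective Φ (x + y)) :
    ConcaveOn ℝ (Ioi 0) (perspective Φ) :=
  ConcaveOn.of_superadditive (convex_Ioi 0) (fun _ hx _ hc => mem_Ioi.2 (smul_pos hc hx))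
    (fun x _ c _ => perspective_smul Φ c x) fun x hx y hy => h x y hx hy

theorem convexOn_perspective_of_subadditive {Φ : (ι → ℝ) → ℝ}
    (h : ∀ x y : ι → ℝ, 0 < x → 0 < y → perspective Φ (x + y) ≤ perspective Φ x + perspective Φ y) :
    ConvexOn ℝ (Ioi 0) (perspective Φ) :=
  ConvexOn.of_subadditive (convex_Ioi 0) (fun _ hx _ hc => mem_Ioi.2 (smul_pos hc hx))
    (fun x _ c _ => perspective_smul Φ c x) fun x hx y hy => h x y hx hy

theorem convexOn_perspective {Φ : (ι → ℝ) → ℝ} (hΦ : ConvexOn ℝ (stdSimplex ℝ ι) Φ) :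
    ConvexOn ℝ (Ioi 0) (perspective Φ) := by
  refine convexOn_perspective_of_subadditive fun x y hx hy => ?_
  have hsx := Fintype.sum_pos hx
  have hsy := Fintype.sum_pos hy
  set sx := ∑ i, x i
  set sy := ∑ i, y i
  have hsum : ∑ i, (x + y) i = sx + sy := Finset.sum_add_distrib
  have hmix : (sx / (sx + sy)) • (fun i => x i / sx) + (sy / (sx + sy)) • (fun i => y i / sy) =
      fun i => (x + y) i / ∑ j, (x + y) j := by
    funext i
    rw [hsum]
    simp only [Pi.add_apply, Pi.smul_apply, smul_eq_mul]
    field_simp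
  have hΦmix := hΦ.2 (normalize_mem_stdSimplex hx) (normalize_mem_stdSimplex hy)
    (div_pos hsx (add_pos hsx hsy)).le (div_pos hsy (add_pos hsx hsy)).le (by field_simp)
  rw [hmix] at hΦmix
  calc perspective Φ (x + y) = (sx + sy) * Φ (fun i => (x + y) i / ∑ j, (x + y) j) := by
        rw [perspective, hsum]
    _ ≤ (sx + sy) * ((sx / (sx + sy)) • Φ (fun i => x i / sx) +
          (sy / (sx + sy)) • Φ (fun i => y i / sy)) :=
        mul_le_mul_of_nonneg_left hΦmix (by positivity)
    _ = sx * Φ (fun i => x i / sx) + sy * Φ (fun i => y i / sy) := by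
        simp only [smul_eq_mul]
        field_simp

end Perspective

theorem ENNReal.toReal_lt_one_of_lt_one {α : ℝ≥0∞} (hα : α < 1) : α.toReal < 1 := by
  simpa using (ENNReal.toReal_lt_toReal hα.ne_top ENNReal.one_ne_top).2 hα

theorem ENNReal.one_lt_toReal_of_one_lt {α : ℝ≥0∞} (hα : 1 < α) (htop : α ≠ ⊤) :
    1 < α.toReal := by
  simpa using (ENNReal.toReal_lt_toReal ENNReal.one_ne_top htop).2 hα

section RenyiConcavity

variable {ι : Type*} [Fintype ι]

theorem concaveOn_sum_comp {φ : ℝ → ℝ} (hφ : ConcaveOn ℝ (Ici 0) φ) :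
    ConcaveOn ℝ (Ici (0 : ι → ℝ)) (fun p => ∑ i, φ (p i)) := by
  refine ⟨convex_Ici 0, fun p hp q hq a b ha hb hab => ?_⟩
  simp only [smul_eq_mul, Finset.mul_sum, ← Finset.sum_add_distrib, Pi.add_apply, Pi.smul_apply]
  exact Finset.sum_le_sum fun i _ => by simpa using hφ.2 (hp i) (hq i) ha hb hab

theorem card_support_mono {p q : ι → ℝ} (h : ∀ i, 0 < p i → 0 < q i) :
    (Nat.card {i // 0 < p i} : ℝ) ≤ Nat.card {i // 0 < q i} := by
  classical
  simp only [Nat.card_eq_fintype_card]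
  exact_mod_cast Fintype.card_subtype_mono _ _ h

theorem card_support_pos {p : ι → ℝ} (h : ∃ i, 0 < p i) : (0 : ℝ) < Nat.card {i // 0 < p i} := by
  obtain ⟨i, hi⟩ := h
  have : Nonempty {i // 0 < p i} := ⟨⟨i, hi⟩⟩
  exact_mod_cast Nat.card_pos

theorem exists_pos_of_mem_stdSimplex {p : ι → ℝ} (hp : p ∈ stdSimplex ℝ ι) : ∃ i, 0 < p i := by
  by_contra! h
  have := Finset.sum_nonpos fun i (_ : i ∈ Finset.univ) => h i
  linarith [hp.2]

theorem concaveOn_renyi_zero : ConcaveOn ℝ (stdSimplex ℝ ι) (renyi 0) := by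
  refine concaveOn_iff_forall_pos.2 ⟨convex_stdSimplex ℝ ι, fun p hp q hq a b ha hb hab => ?_⟩
  simp only [renyi, if_true, smul_eq_mul]
  set L := log2 (Nat.card {i // 0 < (a • p + b • q) i})
  have hmono : ∀ r : ι → ℝ, r ∈ stdSimplex ℝ ι → (∀ i, 0 < r i → 0 < (a • p + b • q) i) →
      log2 (Nat.card {i // 0 < r i}) ≤ L :=
    fun r hr h => Real.logb_le_logb_of_le one_lt_two
      (card_support_pos (exists_pos_of_mem_stdSimplex hr)) (card_support_mono h)
  have hp' := hmono p hp fun i hi => by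
    simpa using add_pos_of_pos_of_nonneg (mul_pos ha hi) (mul_nonneg hb.le (hq.1 i))
  have hq' := hmono q hq fun i hi => by
    simpa using add_pos_of_nonneg_of_pos (mul_nonneg ha.le (hp.1 i)) (mul_pos hb hi)
  calc a * log2 (Nat.card {i // 0 < p i}) + b * log2 (Nat.card {i // 0 < q i})
      ≤ a * L + b * L :=
        add_le_add (mul_le_mul_of_nonneg_left hp' ha.le) (mul_le_mul_of_nonneg_left hq' hb.le)
    _ = L := by rw [← add_mul, hab, one_mul]

theorem concaveOn_renyi_one : ConcaveOn ℝ (stdSimplex ℝ ι) (renyi 1) := by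
  have h : renyi 1 = fun p : ι → ℝ => (Real.log 2)⁻¹ • ∑ i, Real.negMulLog (p i) := by
    funext p
    simp only [renyi, one_ne_zero, if_false, if_true, log2, Real.logb, Real.negMulLog,
      smul_eq_mul, Finset.mul_sum, ← Finset.sum_neg_distrib]
    exact Finset.sum_congr rfl fun i _ => by ring
  rw [h]
  exact ((concaveOn_sum_comp Real.concaveOn_negMulLog).subset (fun p hp => hp.1)
    (convex_stdSimplex ℝ ι)).smul (inv_nonneg.2 (Real.log_nonneg one_le_two))

theorem concaveOn_renyi_of_lt_one {α : ℝ≥0∞} (h0 : α ≠ 0) (h1 : α < 1) :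
    ConcaveOn ℝ (stdSimplex ℝ ι) (renyi α) := by
  have htop : α ≠ ⊤ := h1.ne_top
  have ha0 : 0 < α.toReal := ENNReal.toReal_pos h0 htop
  have ha1 : α.toReal < 1 := ENNReal.toReal_lt_one_of_lt_one h1
  have h : renyi α = fun p : ι → ℝ => (1 - α.toReal)⁻¹ • log2 (∑ i, p i ^ α.toReal) := by
    funext p
    simp [renyi, h0, h1.ne, htop]
  rw [h]
  refine ConcaveOn.smul (inv_nonneg.2 (by linarith)) (ConcaveOn.log2_comp
    ((concaveOn_sum_comp (Real.concaveOn_rpow ha0.le ha1.le)).subset (fun p hp => hp.1)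
      (convex_stdSimplex ℝ ι)) fun p hp => ?_)
  obtain ⟨i, hi⟩ := exists_pos_of_mem_stdSimplex hp
  exact Finset.sum_pos' (fun j _ => Real.rpow_nonneg (hp.1 j) _)
    ⟨i, Finset.mem_univ i, Real.rpow_pos_of_pos hi _⟩

theorem concaveOn_renyi {α : ℝ≥0∞} (hα : α ≤ 1) : ConcaveOn ℝ (stdSimplex ℝ ι) (renyi α) := by
  rcases eq_or_ne α 0 with rfl | h0
  · exact concaveOn_renyi_zero
  rcases hα.eq_or_lt with rfl | h1
  · exact concaveOn_renyi_one
  · exact concaveOn_renyi_of_lt_one h0 h1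

theorem convexOn_sum_mul_renyi {κ : Type*} [Fintype κ] {α : κ → ℝ≥0∞} {c : κ → ℝ}
    (hα : ∀ ℓ, α ℓ ≤ 1) (hc : ∀ ℓ, c ℓ ≤ 0) :
    ConvexOn ℝ (stdSimplex ℝ ι) (fun p => ∑ ℓ, c ℓ * renyi (α ℓ) p) := by
  refine ⟨convex_stdSimplex ℝ ι, fun p hp q hq a b ha hb hab => ?_⟩
  simp only [smul_eq_mul, Finset.mul_sum, ← Finset.sum_add_distrib]
  refine Finset.sum_le_sum fun ℓ _ => ?_
  have h := mul_le_mul_of_nonpos_left ((concaveOn_renyi (hα ℓ)).2 hp hq ha hb hab) (hc ℓ)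
  simp only [smul_eq_mul] at h
  linarith

end RenyiConcavity

namespace Real

variable {ι : Type*} [Fintype ι]

theorem prod_rpow_add_prod_rpow_le_prod_add_rpow {w v v' : ι → ℝ} (hw : ∀ i, 0 ≤ w i)
    (hw1 : ∑ i, w i = 1) (hv : ∀ i, 0 < v i) (hv' : ∀ i, 0 < v' i) :
    ∏ i, v i ^ w i + ∏ i, v' i ^ w i ≤ ∏ i, (v i + v' i) ^ w i := by
  have hvv' : ∀ i, 0 < v i + v' i := fun i => add_pos (hv i) (hv' i)
  -- AM-GM applied to the ratios `u i / (v i + v' i)`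
  have key : ∀ u : ι → ℝ, (∀ i, 0 ≤ u i) →
      ∏ i, u i ^ w i ≤ (∑ i, w i * (u i / (v i + v' i))) * ∏ i, (v i + v' i) ^ w i := by
    intro u hu
    calc ∏ i, u i ^ w i = (∏ i, (u i / (v i + v' i)) ^ w i) * ∏ i, (v i + v' i) ^ w i := by
          rw [← Finset.prod_mul_distrib]
          refine Finset.prod_congr rfl fun i _ => ?_
          rw [← mul_rpow (div_nonneg (hu i) (hvv' i).le) (hvv' i).le,
            div_mul_cancel₀ _ (hvv' i).ne']
      _ ≤ _ := mul_le_mul_of_nonneg_right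
          (geom_mean_le_arith_mean_weighted _ _ _ (fun i _ => hw i) hw1
            fun i _ => div_nonneg (hu i) (hvv' i).le)
          (Finset.prod_nonneg fun i _ => rpow_nonneg (hvv' i).le _)
  have hsum : ∑ i, w i * (v i / (v i + v' i)) + ∑ i, w i * (v' i / (v i + v' i)) = 1 := by
    rw [← Finset.sum_add_distrib, ← hw1]
    refine Finset.sum_congr rfl fun i _ => ?_
    rw [← mul_add, ← add_div, div_self (hvv' i).ne', mul_one]
  calc ∏ i, v i ^ w i + ∏ i, v' i ^ w i
      ≤ (∑ i, w i * (v i / (v i + v' i))) * ∏ i, (v i + v' i) ^ w i +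
        (∑ i, w i * (v' i / (v i + v' i))) * ∏ i, (v i + v' i) ^ w i :=
        add_le_add (key v fun i => (hv i).le) (key v' fun i => (hv' i).le)
    _ = ∏ i, (v i + v' i) ^ w i := by rw [← add_mul, hsum, one_mul]

theorem prod_rpow_mul_prod_compl_rpow_neg [DecidableEq ι] {e U : ι → ℝ} (i₀ : ι)
    (hU : ∀ i, 0 < U i) : (∏ i, U i ^ e i) * ∏ i ∈ {i₀}ᶜ, U i ^ (-e i) = U i₀ ^ e i₀ := by
  rw [Fintype.prod_eq_mul_prod_compl i₀, mul_assoc, ← Finset.prod_mul_distrib,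
    Finset.prod_congr rfl fun i _ => by rw [← rpow_add (hU i), add_neg_cancel, rpow_zero],
    Finset.prod_const_one, mul_one]

theorem prod_ite_rpow_ite [DecidableEq ι] {e U : ι → ℝ} {F : ℝ} (i₀ : ι) (hF : 0 < F)
    (hU : ∀ i, 0 < U i) :
    ∏ i, (if i = i₀ then F else U i) ^ (if i = i₀ then (e i₀)⁻¹ else -e i / e i₀) =
      (F * ∏ i ∈ {i₀}ᶜ, U i ^ (-e i)) ^ (e i₀)⁻¹ := by
  rw [mul_rpow hF.le (Finset.prod_nonneg fun i _ => (rpow_pos_of_pos (hU i) _).le),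
    ← finsetProd_rpow _ _ fun i _ => (rpow_pos_of_pos (hU i) _).le,
    Fintype.prod_eq_mul_prod_compl i₀, if_pos rfl, if_pos rfl]
  congr 1
  refine Finset.prod_congr rfl fun i hi => ?_
  have hi : i ≠ i₀ := by simpa using hi
  rw [if_neg hi, if_neg hi, ← rpow_mul (hU i).le, div_eq_mul_inv]

theorem prod_add_rpow_le_prod_rpow_add_prod_rpow {e v v' : ι → ℝ} (i₀ : ι)
    (he : ∀ i, i ≠ i₀ → e i ≤ 0) (he1 : ∑ i, e i = 1) (hv : ∀ i, 0 < v i) (hv' : ∀ i, 0 < v' i) :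
    ∏ i, (v i + v' i) ^ e i ≤ ∏ i, v i ^ e i + ∏ i, v' i ^ e i := by
  classical
  have hsplit := Fintype.sum_eq_add_sum_compl i₀ e
  have hp : 0 < e i₀ := by
    have := Finset.sum_nonpos fun i (hi : i ∈ ({i₀}ᶜ : Finset ι)) => he i (by simpa using hi)
    linarith
  -- `U i₀` is the weighted geometric mean of `∏ U ^ e` and of the `U i`, `i ≠ i₀`
  set ε : ι → ℝ := fun i => if i = i₀ then (e i₀)⁻¹ else -e i / e i₀
  have hε_nonneg : ∀ i, 0 ≤ ε i := by
    intro i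
    by_cases hi : i = i₀
    · simpa [ε, hi] using hp.le
    · simpa [ε, hi] using div_nonneg (neg_nonneg.2 (he i hi)) hp.le
  have hε1 : ∑ i, ε i = 1 := by
    rw [Fintype.sum_eq_add_sum_compl i₀,
      Finset.sum_congr rfl fun i hi => if_neg (by simpa using hi), ← Finset.sum_div,
      Finset.sum_neg_distrib]
    simp only [ε, if_pos rfl]
    field_simp
    linarith
  have hmean : ∀ U : ι → ℝ, (∀ i, 0 < U i) →
      ∏ i, (if i = i₀ then ∏ j, U j ^ e j else U i) ^ ε i = U i₀ := fun U hU => by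
    rw [prod_ite_rpow_ite i₀ (Finset.prod_pos fun i _ => rpow_pos_of_pos (hU i) _) hU,
      prod_rpow_mul_prod_compl_rpow_neg i₀ hU, rpow_rpow_inv (hU i₀).le hp.ne']
  have hvv' : ∀ i, 0 < v i + v' i := fun i => add_pos (hv i) (hv' i)
  have hA := Finset.prod_pos fun i (_ : i ∈ Finset.univ) => rpow_pos_of_pos (hv i) (e i)
  have hA' := Finset.prod_pos fun i (_ : i ∈ Finset.univ) => rpow_pos_of_pos (hv' i) (e i)
  have hC := Finset.prod_pos fun i (_ : i ∈ ({i₀}ᶜ : Finset ι)) => rpow_pos_of_pos (hvv' i) (-e i)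
  have hgm := prod_rpow_add_prod_rpow_le_prod_add_rpow hε_nonneg hε1
    (v := fun i => if i = i₀ then ∏ j, v j ^ e j else v i)
    (v' := fun i => if i = i₀ then ∏ j, v' j ^ e j else v' i)
    (fun i => by split_ifs; exacts [hA, hv i]) (fun i => by split_ifs; exacts [hA', hv' i])
  simp only [ite_add_ite, hmean v hv, hmean v' hv'] at hgm
  rw [prod_ite_rpow_ite i₀ (add_pos hA hA') hvv', le_rpow_inv_iff_of_pos (hvv' i₀).le
      (mul_pos (add_pos hA hA') hC).le hp, ← prod_rpow_mul_prod_compl_rpow_neg i₀ hvv'] at hgm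
  exact le_of_mul_le_mul_right hgm hC

theorem rpow_sum_rpow_inv_add_le {a : ℝ} (ha0 : 0 < a) (ha1 : a ≤ 1)
    {x y : ι → ℝ} (hx : 0 < x) (hy : 0 < y) :
    (∑ i, x i ^ a) ^ a⁻¹ + (∑ i, y i ^ a) ^ a⁻¹ ≤ (∑ i, (x i + y i) ^ a) ^ a⁻¹ := by
  have hnorm : ∀ z : ι → ℝ, 0 < z →
      0 < (∑ i, z i ^ a) ^ a⁻¹ ∧ ∑ i, (z i / (∑ j, z j ^ a) ^ a⁻¹) ^ a = 1 := by
    intro z hz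
    obtain ⟨i, hi⟩ := (Pi.lt_def.1 hz).2
    have hS : 0 < ∑ j, z j ^ a := Finset.sum_pos' (fun j _ => Real.rpow_nonneg (hz.le j) _)
      ⟨i, Finset.mem_univ i, Real.rpow_pos_of_pos hi _⟩
    refine ⟨Real.rpow_pos_of_pos hS _, ?_⟩
    simp only [Real.div_rpow (hz.le _) (Real.rpow_pos_of_pos hS _).le, ← Finset.sum_div,
      Real.rpow_inv_rpow hS.le ha0.ne', div_self hS.ne']
  obtain ⟨hu, hxu⟩ := hnorm x hx
  obtain ⟨hv, hyv⟩ := hnorm y hy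
  set u := (∑ i, x i ^ a) ^ a⁻¹
  set v := (∑ i, y i ^ a) ^ a⁻¹
  have huv : 0 < u + v := add_pos hu hv
  rw [Real.le_rpow_inv_iff_of_pos huv.le
    (Finset.sum_nonneg fun i _ => Real.rpow_nonneg (add_nonneg (hx.le i) (hy.le i)) _) ha0]
  have hconc : ∀ i, u / (u + v) * (x i / u) ^ a + v / (u + v) * (y i / v) ^ a ≤
      ((x i + y i) / (u + v)) ^ a := fun i => by
    have h := (Real.concaveOn_rpow ha0.le ha1).2 (div_nonneg (hx.le i) hu.le)
      (div_nonneg (hy.le i) hv.le) (div_pos hu huv).le (div_pos hv huv).le (by field_simp)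
    have hmix : u / (u + v) * (x i / u) + v / (u + v) * (y i / v) = (x i + y i) / (u + v) := by
      field_simp
    simpa only [smul_eq_mul, hmix] using h
  calc (u + v) ^ a
      = (u + v) ^ a * (u / (u + v) * ∑ i, (x i / u) ^ a + v / (u + v) * ∑ i, (y i / v) ^ a) := by
        rw [hxu, hyv]
        field_simp
    _ = ∑ i, (u + v) ^ a * (u / (u + v) * (x i / u) ^ a + v / (u + v) * (y i / v) ^ a) := by
        rw [Finset.mul_sum, Finset.mul_sum, ← Finset.sum_add_distrib, Finset.mul_sum]
    _ ≤ ∑ i, (u + v) ^ a * ((x i + y i) / (u + v)) ^ a :=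
        Finset.sum_le_sum fun i _ => mul_le_mul_of_nonneg_left (hconc i) (by positivity)
    _ = ∑ i, (x i + y i) ^ a := by
        refine Finset.sum_congr rfl fun i _ => ?_
        rw [← Real.mul_rpow huv.le (div_nonneg (add_nonneg (hx.le i) (hy.le i)) huv.le),
          mul_div_cancel₀ _ huv.ne']

end Real

section AlphaNorm

variable {ι : Type*} [Fintype ι]

/-- At `α = 0` the value is a placeholder: it only ever enters with the exponent `aRatio 0 = 0`. -/
def alphaNorm (α : ℝ≥0∞) (x : ι → ℝ) : ℝ :=
  if α = 0 then ∑ i, x i else if α = ⊤ then ⨆ i, x i else (∑ i, x i ^ α.toReal) ^ α.toReal⁻¹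

def supportFactor (α : ℝ≥0∞) (c : ℝ) (x : ι → ℝ) : ℝ :=
  if α = 0 then (Nat.card {i // 0 < x i} : ℝ) ^ c else 1

theorem aRatio_zero : aRatio 0 = 0 := by simp [aRatio]

theorem aRatio_nonneg {α : ℝ≥0∞} (hα : α < 1) : 0 ≤ aRatio α := by
  rw [aRatio, if_neg hα.ne_top]
  exact div_nonneg ENNReal.toReal_nonneg
    (by linarith [ENNReal.toReal_lt_one_of_lt_one hα])

theorem aRatio_nonpos {α : ℝ≥0∞} (hα : 1 < α) : aRatio α ≤ 0 := by
  unfold aRatio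
  split_ifs with htop
  · norm_num
  · exact div_nonpos_of_nonneg_of_nonpos ENNReal.toReal_nonneg
      (by linarith [ENNReal.one_lt_toReal_of_one_lt hα htop])

theorem alphaNorm_pos {α : ℝ≥0∞} {x : ι → ℝ} (hx : 0 < x) : 0 < alphaNorm α x := by
  obtain ⟨i, hi⟩ := (Pi.lt_def.1 hx).2
  unfold alphaNorm
  split_ifs
  · exact Fintype.sum_pos hx
  · exact hi.trans_le (le_ciSup (Finite.bddAbove_range x) i)
  · exact Real.rpow_pos_of_pos (Finset.sum_pos' (fun j _ => Real.rpow_nonneg (hx.le j) _)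
      ⟨i, Finset.mem_univ i, Real.rpow_pos_of_pos hi _⟩) _

theorem le_alphaNorm_add {α : ℝ≥0∞} (hα : α < 1) {x y : ι → ℝ} (hx : 0 < x) (hy : 0 < y) :
    alphaNorm α x + alphaNorm α y ≤ alphaNorm α (x + y) := by
  rcases eq_or_ne α 0 with rfl | h0
  · simp [alphaNorm, Finset.sum_add_distrib]
  simp only [alphaNorm, h0, hα.ne_top, if_false, Pi.add_apply]
  exact Real.rpow_sum_rpow_inv_add_le (ENNReal.toReal_pos h0 hα.ne_top)
    (ENNReal.toReal_lt_one_of_lt_one hα).le hx hy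

theorem alphaNorm_add_le {α : ℝ≥0∞} (hα : 1 < α) {x y : ι → ℝ} (hx : 0 ≤ x) (hy : 0 ≤ y) :
    alphaNorm α (x + y) ≤ alphaNorm α x + alphaNorm α y := by
  have h0 : α ≠ 0 := (zero_lt_one.trans hα).ne'
  rcases eq_or_ne α ⊤ with rfl | htop
  · simp only [alphaNorm, h0, if_false, if_true, Pi.add_apply]
    exact Real.iSup_le (fun i => add_le_add (le_ciSup (Finite.bddAbove_range x) i)
      (le_ciSup (Finite.bddAbove_range y) i))
      (add_nonneg (Real.iSup_nonneg hx) (Real.iSup_nonneg hy))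
  simp only [alphaNorm, h0, htop, if_false, Pi.add_apply]
  simpa [one_div] using Real.Lp_add_le_of_nonneg (s := Finset.univ)
    (ENNReal.one_lt_toReal_of_one_lt hα htop).le (fun i _ => hx i) (fun i _ => hy i)

theorem supportFactor_pos {α : ℝ≥0∞} {c : ℝ} {x : ι → ℝ} (hx : 0 < x) :
    0 < supportFactor α c x := by
  unfold supportFactor
  split_ifs
  · exact Real.rpow_pos_of_pos (card_support_pos (by simpa using (Pi.lt_def.1 hx).2)) c
  · exact one_pos

theorem supportFactor_le_add {α : ℝ≥0∞} {c : ℝ} (hc : 0 ≤ c) {x y : ι → ℝ} (hy : 0 ≤ y) :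
    supportFactor α c x ≤ supportFactor α c (x + y) := by
  unfold supportFactor
  split_ifs
  · exact Real.rpow_le_rpow (Nat.cast_nonneg _)
      (card_support_mono fun i hi => by simpa using add_pos_of_pos_of_nonneg hi (hy i)) hc
  · exact le_rfl

theorem supportFactor_add_le {α : ℝ≥0∞} {c : ℝ} (hc : c ≤ 0) {x y : ι → ℝ} (hx : 0 < x)
    (hy : 0 ≤ y) : supportFactor α c (x + y) ≤ supportFactor α c x := by
  unfold supportFactor
  split_ifs
  · exact Real.rpow_le_rpow_of_nonpos (card_support_pos (by simpa using (Pi.lt_def.1 hx).2))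
      (card_support_mono fun i hi => by simpa using add_pos_of_pos_of_nonneg hi (hy i)) hc
  · exact le_rfl

end AlphaNorm

section Factorization

variable {ι κ : Type*} [Fintype ι]

theorem renyi_zero_normalize {x : ι → ℝ} (hx : 0 < x) :
    renyi 0 (fun i => x i / ∑ j, x j) = log2 (Nat.card {i // 0 < x i}) := by
  simp only [renyi, if_true]
  congr 2
  exact Nat.card_congr
    (Equiv.subtypeEquivRight fun i => div_pos_iff_of_pos_right (Fintype.sum_pos hx))

theorem renyi_normalize {α : ℝ≥0∞} (h0 : α ≠ 0) (h1 : α ≠ 1) {x : ι → ℝ} (hx : 0 < x) :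
    renyi α (fun i => x i / ∑ j, x j) = aRatio α * log2 (alphaNorm α x / ∑ i, x i) := by
  have hs := Fintype.sum_pos hx
  rcases eq_or_ne α ⊤ with rfl | htop
  · simp only [renyi, aRatio, alphaNorm, ENNReal.top_ne_zero, ENNReal.top_ne_one, if_false,
      if_true, div_eq_mul_inv, Real.iSup_mul_of_nonneg (inv_nonneg.2 hs.le)]
    ring
  have ha := ENNReal.toReal_pos h0 htop
  have hpow : ∑ i, (x i / ∑ j, x j) ^ α.toReal = (alphaNorm α x / ∑ i, x i) ^ α.toReal := by
    rw [Real.div_rpow (alphaNorm_pos hx).le hs.le, alphaNorm, if_neg h0, if_neg htop,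
      Real.rpow_inv_rpow (Finset.sum_nonneg fun i _ => Real.rpow_nonneg (hx.le i) _) ha.ne',
      Finset.sum_div]
    exact Finset.sum_congr rfl fun i _ => Real.div_rpow (hx.le i) hs.le _
  simp only [renyi, h0, h1, htop, if_false, aRatio]
  unfold log2
  rw [hpow, Real.logb_rpow_eq_mul_logb_of_pos (div_pos (alphaNorm_pos hx) hs)]
  ring

theorem exp2_mul_renyi_normalize {α : ℝ≥0∞} (h1 : α ≠ 1) (c : ℝ) {x : ι → ℝ} (hx : 0 < x) :
    exp2 (c * renyi α (fun i => x i / ∑ j, x j)) =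
      supportFactor α c x * (alphaNorm α x / ∑ i, x i) ^ (c * aRatio α) := by
  rcases eq_or_ne α 0 with rfl | h0
  · rw [renyi_zero_normalize hx,
      exp2_mul_log2 (card_support_pos (by simpa using (Pi.lt_def.1 hx).2)), aRatio_zero,
      mul_zero, Real.rpow_zero, mul_one, supportFactor, if_pos rfl]
  · rw [renyi_normalize h0 h1 hx, ← mul_assoc,
      exp2_mul_log2 (div_pos (alphaNorm_pos hx) (Fintype.sum_pos hx)), supportFactor, if_neg h0,
      one_mul]

def alphaNorms (α : κ → ℝ≥0∞) (x : ι → ℝ) : Option κ → ℝ :=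
  fun o => o.elim (∑ i, x i) fun ℓ => alphaNorm (α ℓ) x

theorem alphaNorms_pos (α : κ → ℝ≥0∞) {x : ι → ℝ} (hx : 0 < x) (o : Option κ) :
    0 < alphaNorms α x o := by
  rcases o with _ | ℓ
  exacts [Fintype.sum_pos hx, alphaNorm_pos hx]

theorem le_alphaNorms_add {α : κ → ℝ≥0∞} {o : Option κ} (ho : ∀ ℓ ∈ o, α ℓ < 1) {x y : ι → ℝ}
    (hx : 0 < x) (hy : 0 < y) : alphaNorms α x o + alphaNorms α y o ≤ alphaNorms α (x + y) o := by
  rcases o with _ | ℓ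
  · exact (Finset.sum_add_distrib).symm.le
  · exact le_alphaNorm_add (ho ℓ rfl) hx hy

variable [Fintype κ]

def alphaNormExponents (α : κ → ℝ≥0∞) (c : κ → ℝ) : Option κ → ℝ :=
  fun o => o.elim (1 - ∑ ℓ, c ℓ * aRatio (α ℓ)) fun ℓ => c ℓ * aRatio (α ℓ)

theorem sum_alphaNormExponents (α : κ → ℝ≥0∞) (c : κ → ℝ) :
    ∑ o, alphaNormExponents α c o = 1 := by
  simp [alphaNormExponents, Fintype.sum_option]

def normMonomial (α : κ → ℝ≥0∞) (c : κ → ℝ) (x : ι → ℝ) : ℝ :=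
  ∏ o, alphaNorms α x o ^ alphaNormExponents α c o

theorem normMonomial_pos (α : κ → ℝ≥0∞) (c : κ → ℝ) {x : ι → ℝ} (hx : 0 < x) :
    0 < normMonomial α c x :=
  Finset.prod_pos fun o _ => Real.rpow_pos_of_pos (alphaNorms_pos α hx o) _

theorem perspective_exp2_renyi_eq {α : κ → ℝ≥0∞} (hα : ∀ ℓ, α ℓ ≠ 1) (c : κ → ℝ) {x : ι → ℝ}
    (hx : 0 < x) :
    perspective (fun p => exp2 (∑ ℓ, c ℓ * renyi (α ℓ) p)) x =
      (∏ ℓ, supportFactor (α ℓ) (c ℓ) x) * normMonomial α c x := by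
  have hs := Fintype.sum_pos hx
  rw [perspective, exp2_sum,
    Finset.prod_congr rfl fun ℓ _ => exp2_mul_renyi_normalize (hα ℓ) (c ℓ) hx,
    Finset.prod_mul_distrib, normMonomial, Fintype.prod_option]
  simp only [alphaNorms, alphaNormExponents, Option.elim,
    Real.div_rpow (alphaNorm_pos hx).le hs.le, Finset.prod_div_distrib,
    ← Real.rpow_sum_of_pos hs, Real.rpow_sub hs, Real.rpow_one]
  field_simp

end Factorization

section Assembly

variable {ι κ : Type*} [Fintype ι] [Fintype κ] {α : κ → ℝ≥0∞} {c : κ → ℝ}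

theorem prod_supportFactor_pos {x : ι → ℝ} (hx : 0 < x) :
    0 < ∏ ℓ, supportFactor (α ℓ) (c ℓ) x :=
  Finset.prod_pos fun _ _ => supportFactor_pos hx

theorem prod_supportFactor_le_add (hc : ∀ ℓ, 0 ≤ c ℓ) {x y : ι → ℝ} (hx : 0 < x) (hy : 0 ≤ y) :
    ∏ ℓ, supportFactor (α ℓ) (c ℓ) x ≤ ∏ ℓ, supportFactor (α ℓ) (c ℓ) (x + y) :=
  Finset.prod_le_prod (fun _ _ => (supportFactor_pos hx).le)
    fun ℓ _ => supportFactor_le_add (hc ℓ) hy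

theorem prod_supportFactor_add_le (hc : ∀ ℓ, c ℓ ≤ 0) {x y : ι → ℝ} (hx : 0 < x) (hy : 0 ≤ y) :
    ∏ ℓ, supportFactor (α ℓ) (c ℓ) (x + y) ≤ ∏ ℓ, supportFactor (α ℓ) (c ℓ) x :=
  Finset.prod_le_prod (fun _ _ => (supportFactor_pos (add_pos_of_pos_of_nonneg hx hy)).le)
    fun ℓ _ => supportFactor_add_le (hc ℓ) hx hy

theorem le_normMonomial_add (hα : ∀ ℓ, α ℓ < 1) (hc : ∀ ℓ, 0 ≤ c ℓ)
    (hsum : ∑ ℓ, c ℓ * aRatio (α ℓ) ≤ 1) {x y : ι → ℝ} (hx : 0 < x) (hy : 0 < y) :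
    normMonomial α c x + normMonomial α c y ≤ normMonomial α c (x + y) := by
  have he : ∀ o, 0 ≤ alphaNormExponents α c o := by
    rintro (_ | ℓ)
    · exact sub_nonneg.2 hsum
    · exact mul_nonneg (hc ℓ) (aRatio_nonneg (hα ℓ))
  have hpos : ∀ o, 0 < alphaNorms α x o + alphaNorms α y o := fun o =>
    add_pos (alphaNorms_pos α hx o) (alphaNorms_pos α hy o)
  exact (Real.prod_rpow_add_prod_rpow_le_prod_add_rpow he (sum_alphaNormExponents α c)
    (alphaNorms_pos α hx) (alphaNorms_pos α hy)).trans
    (Finset.prod_le_prod (fun o _ => Real.rpow_nonneg (hpos o).le _) fun o _ =>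
      Real.rpow_le_rpow (hpos o).le (le_alphaNorms_add (fun ℓ _ => hα ℓ) hx hy) (he o))

theorem normMonomial_add_le (last : κ) (hα : ∀ ℓ, ℓ ≠ last → α ℓ < 1) (hlast : 1 < α last)
    (hc : ∀ ℓ, c ℓ ≤ 0) (hsum : 1 ≤ ∑ ℓ, c ℓ * aRatio (α ℓ)) {x y : ι → ℝ} (hx : 0 < x)
    (hy : 0 < y) : normMonomial α c (x + y) ≤ normMonomial α c x + normMonomial α c y := by
  have he : ∀ o, o ≠ some last → alphaNormExponents α c o ≤ 0 := by
    rintro (_ | ℓ) hℓ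
    · exact sub_nonpos.2 hsum
    · exact mul_nonpos_of_nonpos_of_nonneg (hc ℓ)
        (aRatio_nonneg (hα ℓ fun h => hℓ (congrArg some h)))
  have hmono : ∀ o, alphaNorms α (x + y) o ^ alphaNormExponents α c o ≤
      (alphaNorms α x o + alphaNorms α y o) ^ alphaNormExponents α c o := fun o => by
    by_cases ho : o = some last
    · subst ho
      exact Real.rpow_le_rpow (alphaNorms_pos α (add_pos hx hy) _).le
        (alphaNorm_add_le hlast hx.le hy.le)
        (mul_nonneg_of_nonpos_of_nonpos (hc last) (aRatio_nonpos hlast))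
    · exact Real.rpow_le_rpow_of_nonpos (add_pos (alphaNorms_pos α hx o) (alphaNorms_pos α hy o))
        (le_alphaNorms_add (fun ℓ hℓ => hα ℓ fun h => ho (h ▸ Option.mem_def.1 hℓ)) hx hy)
        (he o ho)
  exact (Finset.prod_le_prod
    (fun o _ => (Real.rpow_pos_of_pos (alphaNorms_pos α (add_pos hx hy) o) _).le)
    fun o _ => hmono o).trans (Real.prod_add_rpow_le_prod_rpow_add_prod_rpow (some last) he
      (sum_alphaNormExponents α c) (alphaNorms_pos α hx) (alphaNorms_pos α hy))

theorem concaveOn_perspective_exp2_renyi (hα : ∀ ℓ, α ℓ < 1) (hc : ∀ ℓ, 0 ≤ c ℓ)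
    (hsum : ∑ ℓ, c ℓ * aRatio (α ℓ) ≤ 1) :
    ConcaveOn ℝ (Ioi (0 : ι → ℝ)) (perspective fun p => exp2 (∑ ℓ, c ℓ * renyi (α ℓ) p)) := by
  refine concaveOn_perspective_of_superadditive fun x y hx hy => ?_
  have hα1 : ∀ ℓ, α ℓ ≠ 1 := fun ℓ => (hα ℓ).ne
  rw [perspective_exp2_renyi_eq hα1 c hx, perspective_exp2_renyi_eq hα1 c hy,
    perspective_exp2_renyi_eq hα1 c (add_pos hx hy)]
  have hDx := prod_supportFactor_le_add (α := α) hc hx hy.le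
  have hDy := add_comm y x ▸ prod_supportFactor_le_add (α := α) hc hy hx.le
  nlinarith [mul_le_mul_of_nonneg_right hDx (normMonomial_pos α c hx).le,
    mul_le_mul_of_nonneg_right hDy (normMonomial_pos α c hy).le,
    mul_le_mul_of_nonneg_left (le_normMonomial_add hα hc hsum hx hy)
      (prod_supportFactor_pos (α := α) (c := c) (add_pos hx hy)).le]

theorem convexOn_perspective_exp2_renyi (last : κ) (hα : ∀ ℓ, ℓ ≠ last → α ℓ < 1)
    (hlast : 1 < α last) (hc : ∀ ℓ, c ℓ ≤ 0) (hsum : 1 ≤ ∑ ℓ, c ℓ * aRatio (α ℓ)) :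
    ConvexOn ℝ (Ioi (0 : ι → ℝ)) (perspective fun p => exp2 (∑ ℓ, c ℓ * renyi (α ℓ) p)) := by
  refine convexOn_perspective_of_subadditive fun x y hx hy => ?_
  have hα1 : ∀ ℓ, α ℓ ≠ 1 := fun ℓ => by
    by_cases hℓ : ℓ = last
    exacts [hℓ ▸ hlast.ne', (hα ℓ hℓ).ne]
  rw [perspective_exp2_renyi_eq hα1 c hx, perspective_exp2_renyi_eq hα1 c hy,
    perspective_exp2_renyi_eq hα1 c (add_pos hx hy)]
  have hDx := prod_supportFactor_add_le (α := α) hc hx hy.le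
  have hDy := add_comm y x ▸ prod_supportFactor_add_le (α := α) hc hy hx.le
  nlinarith [mul_le_mul_of_nonneg_right hDx (normMonomial_pos α c hx).le,
    mul_le_mul_of_nonneg_right hDy (normMonomial_pos α c hy).le,
    mul_le_mul_of_nonneg_left (normMonomial_add_le last hα hlast hc hsum hx hy)
      (prod_supportFactor_pos (α := α) (c := c) (add_pos hx hy)).le]

end Assembly

theorem discrete_measure_concavity_convexity_general (d N : ℕ) (hN : 0 < N) (αs : Fin N → ℝ≥0∞)
    (τs : Fin N → ℝ) (hτpos : ∀ ℓ, 0 < τs ℓ) (t : ℝ) :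
    ((0 < t ∧ (∀ ℓ, αs ℓ < 1) ∧ ∑ ℓ, τs ℓ * aRatio (αs ℓ) ≤ 1 / t) →
      ConcaveOn ℝ {x : Fin d → ℝ | (∀ i, 0 ≤ x i) ∧ x ≠ 0}
        (fun x => (∑ i, x i) *
          exp2 (t * ∑ ℓ, τs ℓ * renyi (αs ℓ) (fun i => x i / ∑ j, x j)))) ∧
    ((t < 0 ∧ ((∀ ℓ, αs ℓ ≤ 1) ∨
        ((∀ ℓ : Fin N, (ℓ : ℕ) < N - 1 → αs ℓ < 1) ∧
          1 < αs ⟨N - 1, Nat.sub_lt hN Nat.one_pos⟩ ∧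
          ∑ ℓ, τs ℓ * aRatio (αs ℓ) ≤ 1 / t))) →
      ConvexOn ℝ {x : Fin d → ℝ | (∀ i, 0 ≤ x i) ∧ x ≠ 0}
        (fun x => (∑ i, x i) *
          exp2 (t * ∑ ℓ, τs ℓ * renyi (αs ℓ) (fun i => x i / ∑ j, x j)))) := by
  have hf : (fun x : Fin d → ℝ => (∑ i, x i) *
      exp2 (t * ∑ ℓ, τs ℓ * renyi (αs ℓ) (fun i => x i / ∑ j, x j))) =
      perspective fun p => exp2 (∑ ℓ, t * τs ℓ * renyi (αs ℓ) p) := by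
    funext x
    rw [perspective]
    simp only [Finset.mul_sum, mul_assoc]
  have hsum : ∑ ℓ, t * τs ℓ * aRatio (αs ℓ) = t * ∑ ℓ, τs ℓ * aRatio (αs ℓ) := by
    simp only [Finset.mul_sum, mul_assoc]
  rw [hf, setOf_nonneg_ne_zero_eq_Ioi]
  refine ⟨fun ⟨ht, hα, hle⟩ => concaveOn_perspective_exp2_renyi hα
    (fun ℓ => (mul_pos ht (hτpos ℓ)).le) (hsum ▸ (le_div_iff₀' ht).1 hle), fun ⟨ht, hcase⟩ => ?_⟩
  have hc : ∀ ℓ, t * τs ℓ ≤ 0 := fun ℓ => (mul_neg_of_neg_of_pos ht (hτpos ℓ)).le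
  rcases hcase with hα | ⟨hα, hlast, hle⟩
  · exact convexOn_perspective (convexOn_sum_mul_renyi hα hc).exp2_comp
  · exact convexOn_perspective_exp2_renyi _
      (fun ℓ hℓ => hα ℓ ((Nat.le_sub_one_of_lt ℓ.isLt).lt_of_ne fun h => hℓ (Fin.ext h))) hlast hc
      (hsum ▸ (le_div_iff_of_neg' ht).1 hle)

/-- Concavity/convexity for discrete measures: sufficient conditions on
`t`, the points `α₁ < ⋯ < α_N` and the weights `τ₁, …, τ_N` under which
`x ↦ ‖x‖₁ · 2^(t·∑ℓ τℓ·H_{αℓ}(x/‖x‖₁))` is concave, respectively convex, on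
`(ℝ≥0)^d ∖ {0}`. -/
theorem discrete_measure_concavity_convexity (d N : ℕ) (hN : 0 < N)
    (αs : Fin N → ℝ≥0∞) (hmono : StrictMono αs)
    (τs : Fin N → ℝ) (hτpos : ∀ ℓ, 0 < τs ℓ) (hτsum : ∑ ℓ, τs ℓ = 1)
    (t : ℝ) (ht : t ≠ 0) :
    ((0 < t ∧ (∀ ℓ, αs ℓ < 1) ∧ ∑ ℓ, τs ℓ * aRatio (αs ℓ) ≤ 1 / t) →
      ConcaveOn ℝ {x : Fin d → ℝ | (∀ i, 0 ≤ x i) ∧ x ≠ 0}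
        (fun x => (∑ i, x i) *
          exp2 (t * ∑ ℓ, τs ℓ * renyi (αs ℓ) (fun i => x i / ∑ j, x j)))) ∧
    ((t < 0 ∧ ((∀ ℓ, αs ℓ ≤ 1) ∨
        ((∀ ℓ : Fin N, (ℓ : ℕ) < N - 1 → αs ℓ < 1) ∧
          1 < αs ⟨N - 1, Nat.sub_lt hN Nat.one_pos⟩ ∧
          ∑ ℓ, τs ℓ * aRatio (αs ℓ) ≤ 1 / t))) →
      ConvexOn ℝ {x : Fin d → ℝ | (∀ i, 0 ≤ x i) ∧ x ≠ 0}
        (fun x => (∑ i, x i) *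
          exp2 (t * ∑ ℓ, τs ℓ * renyi (αs ℓ) (fun i => x i / ∑ j, x j)))) :=
  discrete_measure_concavity_convexity_general d N hN αs τs hτpos t
end
end

section
/- For all joint probability distributions P and Q such that Q is obtained from P by a conditionally mixing channel, it holds that max_{y: P_Y(y)>0} H_0(P_{X|Y=y}) ≤ max_{y′: Q_{Y′}(y′)>0} H_0(Q_{X′|Y′=y′}); that is, the quantity H_{+∞,0}(X|Y)_P = max_{y: P_Y(y)>0} H_0(P_{X|Y=y}) is monotone non-decreasing under conditionally mixing channels. -/
open MeasureTheory
open scoped ENNReal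

noncomputable section

/-!
Since the rows of `∑ᵢ Dᵢ` sum to one, every column `y` of `P` reaches some column `y'` of `Q`
through a term with `Dᵢ(y, y') > 0`, and that column of `Q` dominates entrywise a positive
multiple of `Sᵢ P(·, y)`. A doubly stochastic matrix cannot shrink the support of a nonnegative
vector, so the support of `Q(·, y')` is at least as large as that of `P(·, y)`.
-/

open Finset Matrix

theorem Matrix.mul_apply_mul_le_sum_mul_apply {ι l m n R : Type*} [Fintype ι] [Fintype m]
    [Semiring R] [PartialOrder R] [IsOrderedRing R] {A : ι → Matrix l m R}
    {B : ι → Matrix m n R} (hA : ∀ j a b, 0 ≤ A j a b) (hB : ∀ j a b, 0 ≤ B j a b)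
    (i : ι) (a : l) (b : m) (c : n) :
    A i a b * B i b c ≤ (∑ j, A j * B j) a c := by
  have hterm : ∀ j b, 0 ≤ A j a b * B j b c := fun j b => mul_nonneg (hA j a b) (hB j b c)
  rw [Matrix.sum_apply]
  calc A i a b * B i b c ≤ (A i * B i) a c :=
        single_le_sum (f := fun b => A i a b * B i b c) (fun b _ => hterm i b) (mem_univ b)
    _ ≤ ∑ j, (A j * B j) a c :=
        single_le_sum (f := fun j => (A j * B j) a c)
          (fun j _ => sum_nonneg fun b _ => hterm j b) (mem_univ i)

theorem Matrix.mul_apply_nonneg {l m n R : Type*} [Fintype m] [Semiring R] [PartialOrder R]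
    [IsOrderedRing R] {A : Matrix l m R} {B : Matrix m n R} (hA : ∀ a b, 0 ≤ A a b)
    (hB : ∀ a b, 0 ≤ B a b) (a : l) (c : n) : 0 ≤ (A * B) a c :=
  sum_nonneg fun b _ => mul_nonneg (hA a b) (hB b c)

theorem DoublyStochastic.card_pos_le_card_pos_mulVec {X : Type*} [Fintype X]
    {S : Matrix X X ℝ} (hS : DoublyStochastic S) {v : X → ℝ} (hv : ∀ x, 0 ≤ v x) :
    #{x | 0 < v x} ≤ #{x | 0 < (S *ᵥ v) x} := by
  obtain ⟨hS0, hSrow, hScol⟩ := hS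
  set B : Finset X := {x | 0 < v x}
  set A : Finset X := {x | 0 < (S *ᵥ v) x}
  have hvanish : ∀ x ∉ A, ∀ x' ∈ B, S x x' = 0 := by
    intro x hx x' hx'
    have hterm : ∀ x', 0 ≤ S x x' * v x' := fun x' => mul_nonneg (hS0 x x') (hv x')
    have hzero : (S *ᵥ v) x = 0 :=
      le_antisymm (by simpa [A] using hx) (sum_nonneg fun x' _ => hterm x')
    have := (sum_eq_zero_iff_of_nonneg fun x' _ => hterm x').1 hzero x' (mem_univ x')
    exact (mul_eq_zero.1 this).resolve_right (mem_filter.1 hx').2.ne'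
  -- Count the total mass of the columns in `B`: it lives on the rows in `A`.
  have hcard : (#B : ℝ) ≤ #A :=
    calc (#B : ℝ) = ∑ x' ∈ B, ∑ x, S x x' := by simp [hScol]
      _ = ∑ x' ∈ B, ∑ x ∈ A, S x x' := sum_congr rfl fun x' hx' =>
          (sum_subset (subset_univ A) fun x _ hx => hvanish x hx x' hx').symm
      _ = ∑ x ∈ A, ∑ x' ∈ B, S x x' := sum_comm
      _ ≤ ∑ x ∈ A, ∑ x', S x x' := sum_le_sum fun x _ =>
          sum_le_sum_of_subset_of_nonneg (subset_univ B) fun x' _ _ => hS0 x x'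
      _ = #A := by simp [hSrow]
  exact_mod_cast hcard

theorem margY_pos_iff {X Y : Type*} [Fintype X] {P : Matrix X Y ℝ} {y : Y}
    (hP : ∀ x, 0 ≤ P x y) : 0 < margY P y ↔ 0 < #{x | 0 < P x y} := by
  rw [margY, sum_pos_iff_of_nonneg fun x _ => hP x, card_pos, filter_nonempty_iff]

theorem IsJointProb.exists_margY_pos {X Y : Type*} [Fintype X] [Fintype Y]
    {P : Matrix X Y ℝ} (hP : IsJointProb P) : ∃ y, 0 < margY P y := by
  have htotal : ∑ _y : Y, (0 : ℝ) < ∑ y, margY P y := by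
    simp only [margY, sum_const_zero]
    rw [sum_comm, hP.2]
    exact one_pos
  simpa using exists_lt_of_sum_lt htotal

theorem renyi_zero_condX {X Y : Type*} [Fintype X] {P : Matrix X Y ℝ} {y : Y}
    (hy : 0 < margY P y) : renyi 0 (condX P y) = log2 #{x | 0 < P x y} := by
  rw [renyi, if_pos rfl, Nat.card_eq_fintype_card, Fintype.card_subtype]
  simp only [condX, div_pos_iff_of_pos_right hy]

theorem CondMixed.exists_card_pos_le {X Y Y' : Type*} [Fintype X] [Fintype Y] [Fintype Y']
    {P : Matrix X Y ℝ} {Q : Matrix X Y' ℝ} (hmix : CondMixed P Q) (hP : ∀ x y, 0 ≤ P x y)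
    (y : Y) : ∃ y', #{x | 0 < P x y} ≤ #{x | 0 < Q x y'} := by
  obtain ⟨k, S, D, hS, hD0, hDrow, rfl⟩ := hmix
  obtain ⟨y', -, i, -, hD⟩ : ∃ y' ∈ univ, ∃ i ∈ univ, 0 < D i y y' := by
    simp_rw [← sum_pos_iff_of_nonneg fun i _ => hD0 i y _,
      ← sum_pos_iff_of_nonneg fun y' _ => sum_nonneg fun i _ => hD0 i y y', hDrow y]
    exact one_pos
  refine ⟨y', (DoublyStochastic.card_pos_le_card_pos_mulVec (hS i) fun x => hP x y).trans
    (card_le_card fun x hx => ?_)⟩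
  have hSP : 0 < (S i * P) x y := (mem_filter.1 hx).2
  simp only [mem_filter, mem_univ, true_and]
  exact (mul_pos hSP hD).trans_le <| Matrix.mul_apply_mul_le_sum_mul_apply
    (fun j => Matrix.mul_apply_nonneg (hS j).1 hP) hD0 i x y y'

/-- The quantity `H_{+∞,0}(X|Y)_P = max_{y : P_Y(y)>0} H_0(P_{X|Y=y})` is
monotone non-decreasing under conditionally mixing channels. -/
theorem HposInf_monotone :
    ∀ (X Y Y' : Type) [Fintype X] [Fintype Y] [Fintype Y']
      (P : Matrix X Y ℝ) (Q : Matrix X Y' ℝ),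
      IsJointProb P → IsJointProb Q → CondMixed P Q →
      HposInf P ≤ HposInf Q := by
  intro X Y Y' _ _ _ P Q hP hQ hmix
  obtain ⟨y₀, hy₀⟩ := hP.exists_margY_pos
  refine csSup_le ⟨_, y₀, hy₀, rfl⟩ ?_
  rintro _ ⟨y, hy, rfl⟩
  obtain ⟨y', hcard⟩ := hmix.exists_card_pos_le hP.1 y
  have hPy : 0 < #{x | 0 < P x y} := (margY_pos_iff fun x => hP.1 x y).1 hy
  have hy' : 0 < margY Q y' := (margY_pos_iff fun x => hQ.1 x y').2 (hPy.trans_le hcard)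
  have hbdd : BddAbove ((fun y => renyi 0 (condX Q y)) '' {y | 0 < margY Q y}) :=
    ((Set.toFinite _).image _).bddAbove
  refine le_csSup_of_le hbdd ⟨y', hy', rfl⟩ ?_
  dsimp only
  rw [renyi_zero_condX hy, renyi_zero_condX hy']
  exact Real.logb_le_logb_of_le one_lt_two (by exact_mod_cast hPy) (by exact_mod_cast hcard)
end
end
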